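/- arXiv:2508.01363 — 3 statements merged into one kernel-verified Lean document; each statement's English description precedes it below -/
import Mathlib

section
/- Let (X,T) be an NDS, Z ⊂ X_0, f a potential and c > 0. For each pressure P ∈ {P^B, P^P, P_low, P_up, Q_low, Q_up}: if c ≥ 1 then P(T,cf,Z) ≤ c·P(T,f,Z), and if c ≤ 1 then P(T,cf,Z) ≥ c·P(T,f,Z), where cf denotes the potential {c·f_k}_{k=0}^∞. -/
open Filter Set
open scoped ENNReal NNReal

noncomputable section

namespace NDS

variable {X : ℕ → Type*}

/-- The orbit maps `T_k^j : X k → X (k+j)` of a nonautonomous system. -/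
def iterFrom (T : ∀ k, X k → X (k + 1)) (k : ℕ) : ∀ j, X k → X (k + j)
  | 0 => fun x => x
  | j + 1 => fun x => T (k + j) (iterFrom T k j x)

/-- The orbit maps `T^j = T_{j-1} ∘ ⋯ ∘ T_0 : X 0 → X j`. -/
def iter (T : ∀ k, X k → X (k + 1)) : ∀ j, X 0 → X j
  | 0 => fun x => x
  | j + 1 => fun x => T j (iter T j x)

variable [∀ k, MetricSpace (X k)]

/-- The `n`-th Bowen metric on `X 0`:  `d_n^T(x,y) = max_{0 ≤ j ≤ n-1} d_j (T^j x) (T^j y)`. -/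
def bowenDist (T : ∀ k, X k → X (k + 1)) (n : ℕ) (x y : X 0) : ℝ :=
  (((Finset.range n).sup fun j => nndist (iter T j x) (iter T j y) : ℝ≥0) : ℝ)

/-- The open Bowen ball `B_n^T(x, ε)`. -/
def bowenBall (T : ∀ k, X k → X (k + 1)) (n : ℕ) (x : X 0) (ε : ℝ) : Set (X 0) :=
  {y | bowenDist T n x y < ε}

/-- The closed Bowen ball `clB_n^T(x, ε)`. -/
def bowenClosedBall (T : ∀ k, X k → X (k + 1)) (n : ℕ) (x : X 0) (ε : ℝ) : Set (X 0) :=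
  {y | bowenDist T n x y ≤ ε}

/-- Birkhoff sums starting at level `k`:  `S_{k,n}^T f = Σ_{j<n} f_{k+j} ∘ T_k^j`. -/
def birkFrom (T : ∀ k, X k → X (k + 1)) (f : ∀ k, X k → ℝ) (k n : ℕ) (x : X k) : ℝ :=
  ∑ j ∈ Finset.range n, f (k + j) (iterFrom T k j x)

/-- Birkhoff sums `S_n^T f = Σ_{j<n} f_j ∘ T^j` on `X 0`. -/
def birk (T : ∀ k, X k → X (k + 1)) (f : ∀ k, X k → ℝ) (n : ℕ) (x : X 0) : ℝ :=
  ∑ j ∈ Finset.range n, f j (iter T j x)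

/-- A potential `f = {f_k}` is equicontinuous. -/
def EquicontPotential (f : ∀ k, X k → ℝ) : Prop :=
  ∀ ε : ℝ, 0 < ε → ∃ δ : ℝ, 0 < δ ∧
    ∀ k, ∀ x y : X k, dist x y < δ → |f k x - f k y| < ε

/-- The sequence of maps `T = {T_k}` is equicontinuous. -/
def EquicontMaps (T : ∀ k, X k → X (k + 1)) : Prop :=
  ∀ ε : ℝ, 0 < ε → ∃ δ : ℝ, 0 < δ ∧
    ∀ k, ∀ x y : X k, dist x y < δ → dist (T k x) (T k y) < ε

/-- `F` is an `(n,ε)`-spanning set for `Z`. -/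
def IsSpanning (T : ∀ k, X k → X (k + 1)) (n : ℕ) (ε : ℝ) (Z : Set (X 0))
    (F : Finset (X 0)) : Prop :=
  ∀ x ∈ Z, ∃ y ∈ F, bowenDist T n x y ≤ ε

/-- `E` is an `(n,ε)`-separated set for `Z`. -/
def IsSeparated (T : ∀ k, X k → X (k + 1)) (n : ℕ) (ε : ℝ) (Z : Set (X 0))
    (E : Finset (X 0)) : Prop :=
  ↑E ⊆ Z ∧ ∀ x ∈ E, ∀ y ∈ E, x ≠ y → ε < bowenDist T n x y

/-- The partition sum `Σ_{x ∈ F} e^{S_n^T f(x)}` (valued in `ℝ≥0∞`). -/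
def partSum (T : ∀ k, X k → X (k + 1)) (f : ∀ k, X k → ℝ) (n : ℕ) (F : Finset (X 0)) : ℝ≥0∞ :=
  ∑ x ∈ F, ENNReal.ofReal (Real.exp (birk T f n x))

/-- `Q_n(T,f,Z,ε)`, infimum over `(n,ε)`-spanning sets. -/
def Qn (T : ∀ k, X k → X (k + 1)) (f : ∀ k, X k → ℝ) (Z : Set (X 0)) (n : ℕ) (ε : ℝ) : ℝ≥0∞ :=
  ⨅ (F : Finset (X 0)) (_ : IsSpanning T n ε Z F), partSum T f n F

/-- `P_n(T,f,Z,ε)`, supremum over `(n,ε)`-separated sets. -/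
def Pn (T : ∀ k, X k → X (k + 1)) (f : ∀ k, X k → ℝ) (Z : Set (X 0)) (n : ℕ) (ε : ℝ) : ℝ≥0∞ :=
  ⨆ (E : Finset (X 0)) (_ : IsSeparated T n ε Z E), partSum T f n E

/-- `liminf_n (1/n) log u n` (in `EReal`). -/
def lowRate (u : ℕ → ℝ≥0∞) : EReal :=
  Filter.atTop.liminf fun n : ℕ => (((n : ℝ)⁻¹ : ℝ) : EReal) * ENNReal.log (u n)

/-- `limsup_n (1/n) log u n` (in `EReal`). -/
def upRate (u : ℕ → ℝ≥0∞) : EReal :=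
  Filter.atTop.limsup fun n : ℕ => (((n : ℝ)⁻¹ : ℝ) : EReal) * ENNReal.log (u n)

/-- Lower spanning topological pressure `Q_low(T,f,Z)`; the limit as `ε → 0` is realised as a
supremum over `ε > 0`, the quantity being monotone in `ε`. -/
def Qlow (T : ∀ k, X k → X (k + 1)) (f : ∀ k, X k → ℝ) (Z : Set (X 0)) : EReal :=
  ⨆ (ε : ℝ) (_ : 0 < ε), lowRate fun n => Qn T f Z n ε

/-- Upper spanning topological pressure `Q_up(T,f,Z)`. -/
def Qup (T : ∀ k, X k → X (k + 1)) (f : ∀ k, X k → ℝ) (Z : Set (X 0)) : EReal :=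
  ⨆ (ε : ℝ) (_ : 0 < ε), upRate fun n => Qn T f Z n ε

/-- Lower separated topological pressure `P_low(T,f,Z)`. -/
def Plow (T : ∀ k, X k → X (k + 1)) (f : ∀ k, X k → ℝ) (Z : Set (X 0)) : EReal :=
  ⨆ (ε : ℝ) (_ : 0 < ε), lowRate fun n => Pn T f Z n ε

/-- Upper separated topological pressure `P_up(T,f,Z)`. -/
def Pup (T : ∀ k, X k → X (k + 1)) (f : ∀ k, X k → ℝ) (Z : Set (X 0)) : EReal :=
  ⨆ (ε : ℝ) (_ : 0 < ε), upRate fun n => Pn T f Z n ε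

/-- The critical value `inf {s : M s = 0}` of a "measure profile" `M`, as an extended real. -/
def crit (M : ℝ → ℝ≥0∞) : EReal :=
  sInf (Real.toEReal '' {s : ℝ | M s = 0})

/-- The critical value `sup {s : M s = ∞}` of a "measure profile" `M`, as an extended real. -/
def critSup (M : ℝ → ℝ≥0∞) : EReal :=
  sSup (Real.toEReal '' {s : ℝ | M s = ⊤})

/-- A countable family of Bowen balls (recorded by their (center, order) data) which is an
`(N,ε)`-cover of `Z`. -/
def IsBowenCover (T : ∀ k, X k → X (k + 1)) (N : ℕ) (ε : ℝ) (Z : Set (X 0))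
    (C : Set (X 0 × ℕ)) : Prop :=
  C.Countable ∧ (∀ p ∈ C, N ≤ p.2) ∧ Z ⊆ ⋃ p ∈ C, bowenBall T p.2 p.1 ε

/-- A countable disjoint family of closed Bowen balls with centers in `Z` and orders `≥ N`:
an `(N,ε)`-packing of `Z`. -/
def IsBowenPacking (T : ∀ k, X k → X (k + 1)) (N : ℕ) (ε : ℝ) (Z : Set (X 0))
    (P : Set (X 0 × ℕ)) : Prop :=
  P.Countable ∧ (∀ p ∈ P, p.1 ∈ Z ∧ N ≤ p.2) ∧
    ∀ p ∈ P, ∀ q ∈ P, p ≠ q →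
      Disjoint (bowenClosedBall T p.2 p.1 ε) (bowenClosedBall T q.2 q.1 ε)

/-- `Σ_i exp (-n_i s + S_{n_i}^T f (x_i))` over a family of (center, order) pairs. -/
def ballSum (T : ∀ k, X k → X (k + 1)) (f : ∀ k, X k → ℝ) (s : ℝ) (C : Set (X 0 × ℕ)) : ℝ≥0∞ :=
  ∑' p : C, ENNReal.ofReal (Real.exp (-(p.1.2 : ℝ) * s + birk T f p.1.2 p.1.1))

/-- The Hausdorff-type pre-measure `M^s_{N,ε}(T,f,Z)`. -/
def bowenPreMeas (T : ∀ k, X k → X (k + 1)) (f : ∀ k, X k → ℝ) (Z : Set (X 0))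
    (s : ℝ) (N : ℕ) (ε : ℝ) : ℝ≥0∞ :=
  ⨅ (C : Set (X 0 × ℕ)) (_ : IsBowenCover T N ε Z C), ballSum T f s C

/-- `M^s_ε(T,f,Z) = lim_{N → ∞} M^s_{N,ε}(T,f,Z)` (an increasing limit, i.e. a supremum). -/
def bowenMeas (T : ∀ k, X k → X (k + 1)) (f : ∀ k, X k → ℝ) (Z : Set (X 0))
    (s : ℝ) (ε : ℝ) : ℝ≥0∞ :=
  ⨆ N : ℕ, bowenPreMeas T f Z s N ε

/-- `P^B(T,f,Z,ε)`: the critical value of `s ↦ M^s_ε(T,f,Z)`. -/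
def PBe (T : ∀ k, X k → X (k + 1)) (f : ∀ k, X k → ℝ) (Z : Set (X 0)) (ε : ℝ) : EReal :=
  crit fun s => bowenMeas T f Z s ε

/-- The Bowen (Pesin–Pitskel') topological pressure `P^B(T,f,Z)`; the limit as `ε → 0` is
realised as a supremum over `ε > 0` by monotonicity. -/
def PB (T : ∀ k, X k → X (k + 1)) (f : ∀ k, X k → ℝ) (Z : Set (X 0)) : EReal :=
  ⨆ (ε : ℝ) (_ : 0 < ε), PBe T f Z ε

/-- The packing pre-measure `𝒫^s_{N,ε}(T,f,Z)`. -/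
def packPre (T : ∀ k, X k → X (k + 1)) (f : ∀ k, X k → ℝ) (Z : Set (X 0))
    (s : ℝ) (N : ℕ) (ε : ℝ) : ℝ≥0∞ :=
  ⨆ (P : Set (X 0 × ℕ)) (_ : IsBowenPacking T N ε Z P), ballSum T f s P

/-- The packing content `𝒫^s_{∞,ε}(T,f,Z) = lim_{N→∞} 𝒫^s_{N,ε}` (a decreasing limit, i.e. an
infimum). -/
def packContent (T : ∀ k, X k → X (k + 1)) (f : ∀ k, X k → ℝ) (Z : Set (X 0))
    (s : ℝ) (ε : ℝ) : ℝ≥0∞ :=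
  ⨅ N : ℕ, packPre T f Z s N ε

/-- The packing measure `𝒫^s_ε(T,f,Z)`, obtained from the content by countable decompositions. -/
def packMeas (T : ∀ k, X k → X (k + 1)) (f : ∀ k, X k → ℝ) (Z : Set (X 0))
    (s : ℝ) (ε : ℝ) : ℝ≥0∞ :=
  ⨅ (D : ℕ → Set (X 0)) (_ : Z ⊆ ⋃ i, D i), ∑' i, packContent T f (D i) s ε

/-- `P^P(T,f,Z,ε)`: the critical value of `s ↦ 𝒫^s_ε(T,f,Z)`. -/
def PPe (T : ∀ k, X k → X (k + 1)) (f : ∀ k, X k → ℝ) (Z : Set (X 0)) (ε : ℝ) : EReal :=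
  crit fun s => packMeas T f Z s ε

/-- The packing topological pressure `P^P(T,f,Z)`. -/
def PP (T : ∀ k, X k → X (k + 1)) (f : ∀ k, X k → ℝ) (Z : Set (X 0)) : EReal :=
  ⨆ (ε : ℝ) (_ : 0 < ε), PPe T f Z ε

end NDS

/-- `P(c·f) ≤ c·P(f)` for `c ≥ 1` and `P(c·f) ≥ c·P(f)` for `c ≤ 1`. -/
def NDS.ScaleIneq (a b : EReal) (c : ℝ) : Prop :=
  (1 ≤ c → a ≤ (c : EReal) * b) ∧ (c ≤ 1 → (c : EReal) * b ≤ a)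


/-! For `c ≥ 1` the map `t ↦ t ^ c` on `ℝ≥0∞` is superadditive and commutes with infima, while
`e^{S_n (c f)} = (e^{S_n f})^c`. Hence every partition sum, cover sum and packing sum for `c f`
(at the rescaled exponent `c s`) is at most the `c`-th power of the one for `f`, and this passes
through all the infima, suprema and countable sums defining the six pressures; taking
`(1/n) log` or critical exponents turns the power `c` into a factor `c`. The case `c ≤ 1`
follows by applying the case `1 / c ≥ 1` to the potential `c f`. -/

namespace ENNReal

theorem sum_rpow_le_rpow_sum {ι : Type*} (s : Finset ι) (a : ι → ℝ≥0∞) {p : ℝ} (hp : 1 ≤ p) :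
    ∑ i ∈ s, a i ^ p ≤ (∑ i ∈ s, a i) ^ p := by
  classical
  induction s using Finset.induction_on with
  | empty => simp [zero_rpow_of_pos (zero_lt_one.trans_le hp)]
  | insert i s hi ih =>
    rw [Finset.sum_insert hi, Finset.sum_insert hi]
    exact (add_le_add_right ih _).trans (add_rpow_le_rpow_add _ _ hp)

theorem tsum_rpow_le_rpow_tsum {ι : Type*} (a : ι → ℝ≥0∞) {p : ℝ} (hp : 1 ≤ p) :
    ∑' i, a i ^ p ≤ (∑' i, a i) ^ p := by
  rw [ENNReal.tsum_eq_iSup_sum]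
  exact iSup_le fun s => (sum_rpow_le_rpow_sum s a hp).trans
    (rpow_le_rpow (ENNReal.sum_le_tsum s) (zero_le_one.trans hp))

theorem iInf_rpow {ι : Sort*} (u : ι → ℝ≥0∞) {p : ℝ} (hp : 0 < p) :
    (⨅ i, u i) ^ p = ⨅ i, u i ^ p :=
  (orderIsoRpow p hp).map_iInf u

theorem ofReal_exp_mul (c t : ℝ) :
    ENNReal.ofReal (Real.exp (c * t)) = ENNReal.ofReal (Real.exp t) ^ c := by
  rw [mul_comm, Real.exp_mul, ofReal_rpow_of_pos (Real.exp_pos t)]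

end ENNReal

theorem EReal.biSup_le_mul_biSup {ι : Type*} {p : ι → Prop} {g h : ι → EReal} {c : ℝ} (hc : 0 ≤ c)
    (hgh : ∀ i, p i → g i ≤ c * h i) : ⨆ (i) (_ : p i), g i ≤ c * ⨆ (i) (_ : p i), h i :=
  iSup₂_le fun i hi => (hgh i hi).trans <|
    mul_le_mul_of_nonneg_left (le_iSup₂ (f := fun i (_ : p i) => h i) i hi) (by exact_mod_cast hc)

namespace NDS

theorem crit_le_mul {M M' : ℝ → ℝ≥0∞} {c : ℝ} (hc : 0 < c)
    (h : ∀ s, M s = 0 → M' (c * s) = 0) : crit M' ≤ c * crit M := by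
  have hc' : (0 : EReal) < c := by exact_mod_cast hc
  rw [← EReal.div_le_iff_le_mul hc' (EReal.coe_ne_top c)]
  refine le_sInf ?_
  rintro _ ⟨s, hs, rfl⟩
  rw [EReal.div_le_iff_le_mul hc' (EReal.coe_ne_top c), ← EReal.coe_mul]
  exact sInf_le ⟨c * s, h s hs, rfl⟩

theorem inv_mul_log_le_mul {c : ℝ} {a b : ℝ≥0∞} (h : b ≤ a ^ c) (n : ℕ) :
    (((n : ℝ)⁻¹ : ℝ) : EReal) * ENNReal.log b
      ≤ c * ((((n : ℝ)⁻¹ : ℝ) : EReal) * ENNReal.log a) := by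
  have hn : (0 : EReal) ≤ (((n : ℝ)⁻¹ : ℝ) : EReal) := by exact_mod_cast inv_nonneg.2 n.cast_nonneg
  calc (((n : ℝ)⁻¹ : ℝ) : EReal) * ENNReal.log b
      ≤ (((n : ℝ)⁻¹ : ℝ) : EReal) * (c * ENNReal.log a) :=
        mul_le_mul_of_nonneg_left ((ENNReal.log_le_log h).trans_eq ENNReal.log_rpow) hn
    _ = c * ((((n : ℝ)⁻¹ : ℝ) : EReal) * ENNReal.log a) := by rw [mul_left_comm]

theorem lowRate_le_mul {c : ℝ} (hc : 0 ≤ c) {u v : ℕ → ℝ≥0∞} (h : ∀ n, v n ≤ u n ^ c) :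
    lowRate v ≤ c * lowRate u := by
  rw [lowRate, lowRate, ← EReal.liminf_const_mul_of_nonneg_of_ne_top (by exact_mod_cast hc)
    (EReal.coe_ne_top c)]
  exact liminf_le_liminf (.of_forall fun n => inv_mul_log_le_mul (h n) n)

theorem upRate_le_mul {c : ℝ} (hc : 0 ≤ c) {u v : ℕ → ℝ≥0∞} (h : ∀ n, v n ≤ u n ^ c) :
    upRate v ≤ c * upRate u := by
  rw [upRate, upRate, ← EReal.limsup_const_mul_of_nonneg_of_ne_top (by exact_mod_cast hc)
    (EReal.coe_ne_top c)]
  exact limsup_le_limsup (.of_forall fun n => inv_mul_log_le_mul (h n) n)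

variable {X : ℕ → Type*} (T : ∀ k, X k → X (k + 1)) (f : ∀ k, X k → ℝ) {c : ℝ}

theorem birk_const_mul (n : ℕ) (x : X 0) :
    birk T (fun k x => c * f k x) n x = c * birk T f n x := by
  simp only [birk, Finset.mul_sum]

theorem partSum_const_mul_le (hc : 1 ≤ c) (n : ℕ) (F : Finset (X 0)) :
    partSum T (fun k x => c * f k x) n F ≤ partSum T f n F ^ c := by
  simp only [partSum, birk_const_mul, ENNReal.ofReal_exp_mul]
  exact ENNReal.sum_rpow_le_rpow_sum F _ hc

theorem ballSum_const_mul_le (hc : 1 ≤ c) (s : ℝ) (C : Set (X 0 × ℕ)) :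
    ballSum T (fun k x => c * f k x) (c * s) C ≤ ballSum T f s C ^ c := by
  have hexp (p : X 0 × ℕ) : -(p.2 : ℝ) * (c * s) + c * birk T f p.2 p.1
      = c * (-(p.2 : ℝ) * s + birk T f p.2 p.1) := by ring
  simp only [ballSum, birk_const_mul, hexp, ENNReal.ofReal_exp_mul]
  exact ENNReal.tsum_rpow_le_rpow_tsum _ hc

variable [∀ k, MetricSpace (X k)]

theorem Pn_const_mul_le (hc : 1 ≤ c) (Z : Set (X 0)) (n : ℕ) (ε : ℝ) :
    Pn T (fun k x => c * f k x) Z n ε ≤ Pn T f Z n ε ^ c :=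
  iSup₂_le fun E hE => (partSum_const_mul_le T f hc n E).trans <|
    ENNReal.rpow_le_rpow (le_iSup₂ (f := fun E (_ : IsSeparated T n ε Z E) => partSum T f n E)
      E hE) (zero_le_one.trans hc)

theorem Qn_const_mul_le (hc : 1 ≤ c) (Z : Set (X 0)) (n : ℕ) (ε : ℝ) :
    Qn T (fun k x => c * f k x) Z n ε ≤ Qn T f Z n ε ^ c := by
  have hc0 : 0 < c := zero_lt_one.trans_le hc
  simp only [Qn, ENNReal.iInf_rpow _ hc0]
  exact iInf₂_mono fun F _ => partSum_const_mul_le T f hc n F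

theorem bowenMeas_const_mul_le (hc : 1 ≤ c) (Z : Set (X 0)) (s ε : ℝ) :
    bowenMeas T (fun k x => c * f k x) Z (c * s) ε ≤ bowenMeas T f Z s ε ^ c := by
  have hc0 : 0 < c := zero_lt_one.trans_le hc
  refine iSup_le fun N => ?_
  calc bowenPreMeas T (fun k x => c * f k x) Z (c * s) N ε
      ≤ bowenPreMeas T f Z s N ε ^ c := by
        simp only [bowenPreMeas, ENNReal.iInf_rpow _ hc0]
        exact iInf₂_mono fun C _ => ballSum_const_mul_le T f hc s C
    _ ≤ bowenMeas T f Z s ε ^ c :=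
        ENNReal.rpow_le_rpow (le_iSup (fun N => bowenPreMeas T f Z s N ε) N) hc0.le

theorem packContent_const_mul_le (hc : 1 ≤ c) (Z : Set (X 0)) (s ε : ℝ) :
    packContent T (fun k x => c * f k x) Z (c * s) ε ≤ packContent T f Z s ε ^ c := by
  have hc0 : 0 < c := zero_lt_one.trans_le hc
  simp only [packContent, ENNReal.iInf_rpow _ hc0]
  refine iInf_mono fun N => iSup₂_le fun P hP => (ballSum_const_mul_le T f hc s P).trans ?_
  exact ENNReal.rpow_le_rpow (le_iSup₂ (f := fun P (_ : IsBowenPacking T N ε Z P) =>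
    ballSum T f s P) P hP) hc0.le

theorem packMeas_const_mul_le (hc : 1 ≤ c) (Z : Set (X 0)) (s ε : ℝ) :
    packMeas T (fun k x => c * f k x) Z (c * s) ε ≤ packMeas T f Z s ε ^ c := by
  simp only [packMeas, ENNReal.iInf_rpow _ (zero_lt_one.trans_le hc)]
  refine iInf₂_mono fun D _ => ?_
  calc ∑' i, packContent T (fun k x => c * f k x) (D i) (c * s) ε
      ≤ ∑' i, packContent T f (D i) s ε ^ c :=
        ENNReal.tsum_le_tsum fun i => packContent_const_mul_le T f hc (D i) s ε
    _ ≤ (∑' i, packContent T f (D i) s ε) ^ c := ENNReal.tsum_rpow_le_rpow_tsum _ hc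

section OneLe

variable (hc : 1 ≤ c) (Z : Set (X 0))
include hc

theorem PB_const_mul_le : PB T (fun k x => c * f k x) Z ≤ c * PB T f Z := by
  have hc0 : 0 < c := zero_lt_one.trans_le hc
  refine EReal.biSup_le_mul_biSup hc0.le fun ε _ => crit_le_mul hc0 fun s hs => ?_
  simpa [hs, ENNReal.zero_rpow_of_pos hc0] using bowenMeas_const_mul_le T f hc Z s ε

theorem PP_const_mul_le : PP T (fun k x => c * f k x) Z ≤ c * PP T f Z := by
  have hc0 : 0 < c := zero_lt_one.trans_le hc
  refine EReal.biSup_le_mul_biSup hc0.le fun ε _ => crit_le_mul hc0 fun s hs => ?_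
  simpa [hs, ENNReal.zero_rpow_of_pos hc0] using packMeas_const_mul_le T f hc Z s ε

theorem Plow_const_mul_le : Plow T (fun k x => c * f k x) Z ≤ c * Plow T f Z :=
  EReal.biSup_le_mul_biSup (zero_le_one.trans hc) fun ε _ =>
    lowRate_le_mul (zero_le_one.trans hc) fun n => Pn_const_mul_le T f hc Z n ε

theorem Pup_const_mul_le : Pup T (fun k x => c * f k x) Z ≤ c * Pup T f Z :=
  EReal.biSup_le_mul_biSup (zero_le_one.trans hc) fun ε _ =>
    upRate_le_mul (zero_le_one.trans hc) fun n => Pn_const_mul_le T f hc Z n ε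

theorem Qlow_const_mul_le : Qlow T (fun k x => c * f k x) Z ≤ c * Qlow T f Z :=
  EReal.biSup_le_mul_biSup (zero_le_one.trans hc) fun ε _ =>
    lowRate_le_mul (zero_le_one.trans hc) fun n => Qn_const_mul_le T f hc Z n ε

theorem Qup_const_mul_le : Qup T (fun k x => c * f k x) Z ≤ c * Qup T f Z :=
  EReal.biSup_le_mul_biSup (zero_le_one.trans hc) fun ε _ =>
    upRate_le_mul (zero_le_one.trans hc) fun n => Qn_const_mul_le T f hc Z n ε

end OneLe

theorem ScaleIneq.of_const_mul_le {Y : ℕ → Type*} {P : (∀ k, Y k → ℝ) → EReal}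
    (hP : ∀ c : ℝ, 1 ≤ c → ∀ g, P (fun k x => c * g k x) ≤ c * P g)
    (g : ∀ k, Y k → ℝ) (hc : 0 < c) : ScaleIneq (P fun k x => c * g k x) (P g) c := by
  refine ⟨fun h => hP c h g, fun h => ?_⟩
  have hinv := hP c⁻¹ (one_le_inv₀ hc |>.2 h) fun k x => c * g k x
  simp only [inv_mul_cancel_left₀ hc.ne'] at hinv
  calc (c : EReal) * P g ≤ c * (((c⁻¹ : ℝ) : EReal) * P fun k x => c * g k x) :=
        mul_le_mul_of_nonneg_left hinv (by exact_mod_cast hc.le)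
    _ = P fun k x => c * g k x := by
        rw [← mul_assoc, ← EReal.coe_mul, mul_inv_cancel₀ hc.ne', EReal.coe_one, one_mul]

end NDS

theorem pressure_scaling_general {X : ℕ → Type*} [∀ k, MetricSpace (X k)]
    (T : ∀ k, X k → X (k + 1))
    (f : ∀ k, X k → ℝ) (Z : Set (X 0)) (c : ℝ) (hc : 0 < c) :
    NDS.ScaleIneq (NDS.PB T (fun k x => c * f k x) Z) (NDS.PB T f Z) c ∧
    NDS.ScaleIneq (NDS.PP T (fun k x => c * f k x) Z) (NDS.PP T f Z) c ∧
    NDS.ScaleIneq (NDS.Plow T (fun k x => c * f k x) Z) (NDS.Plow T f Z) c ∧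
    NDS.ScaleIneq (NDS.Pup T (fun k x => c * f k x) Z) (NDS.Pup T f Z) c ∧
    NDS.ScaleIneq (NDS.Qlow T (fun k x => c * f k x) Z) (NDS.Qlow T f Z) c ∧
    NDS.ScaleIneq (NDS.Qup T (fun k x => c * f k x) Z) (NDS.Qup T f Z) c :=
  ⟨.of_const_mul_le (P := (NDS.PB T · Z)) (fun _ h g => NDS.PB_const_mul_le T g h Z) f hc,
   .of_const_mul_le (P := (NDS.PP T · Z)) (fun _ h g => NDS.PP_const_mul_le T g h Z) f hc,
   .of_const_mul_le (P := (NDS.Plow T · Z)) (fun _ h g => NDS.Plow_const_mul_le T g h Z) f hc,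
   .of_const_mul_le (P := (NDS.Pup T · Z)) (fun _ h g => NDS.Pup_const_mul_le T g h Z) f hc,
   .of_const_mul_le (P := (NDS.Qlow T · Z)) (fun _ h g => NDS.Qlow_const_mul_le T g h Z) f hc,
   .of_const_mul_le (P := (NDS.Qup T · Z)) (fun _ h g => NDS.Qup_const_mul_le T g h Z) f hc⟩

/-- For every `c > 0` and each of the six pressures `P`, one has
`P(T, c·f, Z) ≤ c·P(T,f,Z)` when `c ≥ 1` and `P(T, c·f, Z) ≥ c·P(T,f,Z)` when `c ≤ 1`. -/
theorem pressure_scaling {X : ℕ → Type*} [∀ k, MetricSpace (X k)]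
    [∀ k, CompactSpace (X k)] (T : ∀ k, X k → X (k + 1)) (hT : ∀ k, Continuous (T k))
    (f : ∀ k, X k → ℝ) (hf : ∀ k, Continuous (f k)) (Z : Set (X 0)) (c : ℝ) (hc : 0 < c) :
    NDS.ScaleIneq (NDS.PB T (fun k x => c * f k x) Z) (NDS.PB T f Z) c ∧
    NDS.ScaleIneq (NDS.PP T (fun k x => c * f k x) Z) (NDS.PP T f Z) c ∧
    NDS.ScaleIneq (NDS.Plow T (fun k x => c * f k x) Z) (NDS.Plow T f Z) c ∧
    NDS.ScaleIneq (NDS.Pup T (fun k x => c * f k x) Z) (NDS.Pup T f Z) c ∧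
    NDS.ScaleIneq (NDS.Qlow T (fun k x => c * f k x) Z) (NDS.Qlow T f Z) c ∧
    NDS.ScaleIneq (NDS.Qup T (fun k x => c * f k x) Z) (NDS.Qup T f Z) c :=
  pressure_scaling_general T f Z c hc
end
end

section
/- Product rules for lower and upper topological pressures: Let (X,T) and (Y,R) be NDSs, Z ⊂ X_0, W ⊂ Y_0, and let f (on X) and g (on Y) be equicontinuous potentials (so the lower and upper topological pressures P_L, P_U of f, g and of f∔g exist). Then P_L(T,f,Z) + P_L(R,g,W) ≤ P_L(T×R, f∔g, Z×W) ≤ P_L(T,f,Z) + P_U(R,g,W) and P_L(T,f,Z) + P_U(R,g,W) ≤ P_U(T×R, f∔g, Z×W) ≤ P_U(T,f,Z) + P_U(R,g,W), provided the sums appearing are not of the form (+∞)+(−∞). -/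
open Filter Set
open scoped ENNReal NNReal

noncomputable section

/-- The sum `a + b` in `EReal` is not of the indeterminate form `(+∞) + (−∞)`. -/
def NDS.AddCompat (a b : EReal) : Prop :=
  ¬(a = ⊤ ∧ b = ⊥) ∧ ¬(a = ⊥ ∧ b = ⊤)

namespace NDSAux

lemma ereal_distrib {r : ℝ} (hr : 0 ≤ r) (x y : EReal) :
    (r : EReal) * (x + y) = (r : EReal) * x + (r : EReal) * y := by
  rcases hr.eq_or_lt with rfl | hr
  · simp
  · induction x using EReal.rec <;> induction y using EReal.rec <;>
      simp_all [EReal.coe_mul_bot_of_pos hr, EReal.coe_mul_top_of_pos hr, ← EReal.coe_mul,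
        ← EReal.coe_add, mul_add]

lemma ereal_le_of_forall {x y : EReal} (h : ∀ γ : ℝ, 0 < γ → x ≤ (γ : EReal) + y) : x ≤ y := by
  induction y using EReal.rec with
  | bot => simpa using h 1 one_pos
  | coe b =>
    induction x using EReal.rec with
    | bot => exact bot_le
    | coe a =>
      norm_cast
      by_contra hab
      push_neg at hab
      have := h ((a - b) / 2) (by linarith)
      norm_cast at this
      linarith
    | top =>
      exfalso
      have := h 1 one_pos
      rw [← EReal.coe_add, top_le_iff] at this
      exact EReal.coe_ne_top _ this
  | top => exact le_top

lemma ereal_mul_le_mul {r : ℝ} (hr : 0 ≤ r) {x y : EReal} (h : x ≤ y) :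
    (r : EReal) * x ≤ (r : EReal) * y :=
  mul_le_mul_of_nonneg_left h (by exact_mod_cast hr)

end NDSAux
open Filter Set
open scoped ENNReal NNReal

namespace NDSAux
open NDS

section Bowen
variable {X : ℕ → Type*} [∀ k, MetricSpace (X k)] {T : ∀ k, X k → X (k + 1)}

lemma iter_succ (T : ∀ k, X k → X (k + 1)) (j : ℕ) (x : X 0) :
    iter T (j + 1) x = T j (iter T j x) := rfl

lemma continuous_iter (hT : ∀ k, Continuous (T k)) : ∀ j, Continuous (iter T j)
  | 0 => continuous_id
  | j + 1 => (hT j).comp (continuous_iter hT j)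

lemma dist_iter_le_bowenDist {n j : ℕ} (h : j < n) (x y : X 0) :
    dist (iter T j x) (iter T j y) ≤ bowenDist T n x y := by
  rw [← coe_nndist, bowenDist, NNReal.coe_le_coe]
  exact Finset.le_sup (f := fun j => nndist (iter T j x) (iter T j y)) (Finset.mem_range.2 h)

lemma bowenDist_nonneg (T : ∀ k, X k → X (k + 1)) (n : ℕ) (x y : X 0) :
    0 ≤ bowenDist T n x y := NNReal.coe_nonneg _

lemma bowenDist_le {n : ℕ} {x y : X 0} {c : ℝ} (hc : 0 ≤ c)
    (h : ∀ j < n, dist (iter T j x) (iter T j y) ≤ c) : bowenDist T n x y ≤ c := by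
  lift c to ℝ≥0 using hc
  rw [bowenDist, NNReal.coe_le_coe]
  refine Finset.sup_le fun j hj => ?_
  have := h j (Finset.mem_range.1 hj)
  rw [← coe_nndist, NNReal.coe_le_coe] at this
  exact this

lemma bowenDist_self (T : ∀ k, X k → X (k + 1)) (n : ℕ) (x : X 0) :
    bowenDist T n x x = 0 := by
  simp [bowenDist, nndist_self]

lemma bowenDist_comm (T : ∀ k, X k → X (k + 1)) (n : ℕ) (x y : X 0) :
    bowenDist T n x y = bowenDist T n y x := by
  simp [bowenDist, nndist_comm]

lemma bowenDist_triangle (T : ∀ k, X k → X (k + 1)) (n : ℕ) (x y z : X 0) :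
    bowenDist T n x z ≤ bowenDist T n x y + bowenDist T n y z := by
  refine bowenDist_le (add_nonneg (bowenDist_nonneg T n x y) (bowenDist_nonneg T n y z))
    fun j hj => (dist_triangle _ (iter T j y) _).trans
      (add_le_add (dist_iter_le_bowenDist hj x y) (dist_iter_le_bowenDist hj y z))

lemma bowenDist_lt_iff {n : ℕ} {x y : X 0} {ε : ℝ} (hε : 0 < ε) :
    bowenDist T n x y < ε ↔ ∀ j < n, dist (iter T j x) (iter T j y) < ε := by
  constructor
  · exact fun h j hj => (dist_iter_le_bowenDist hj x y).trans_lt h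
  · intro h
    rcases Nat.eq_zero_or_pos n with rfl | hn
    · simpa [bowenDist] using hε
    · obtain ⟨j, hj, hsup⟩ := Finset.exists_mem_eq_sup (Finset.range n)
        (Finset.nonempty_range_iff.2 hn.ne') fun j => nndist (iter T j x) (iter T j y)
      rw [bowenDist, hsup, coe_nndist]
      exact h j (Finset.mem_range.1 hj)

end Bowen
end NDSAux
namespace NDSAux
open NDS

section Prod
variable {X Y : ℕ → Type*} [∀ k, MetricSpace (X k)] [∀ k, MetricSpace (Y k)]
  {T : ∀ k, X k → X (k + 1)} {R : ∀ k, Y k → Y (k + 1)}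
  {f : ∀ k, X k → ℝ} {g : ∀ k, Y k → ℝ}

lemma iter_prod (T : ∀ k, X k → X (k + 1)) (R : ∀ k, Y k → Y (k + 1)) :
    ∀ (j : ℕ) (x : X 0) (y : Y 0),
      iter (X := fun k => X k × Y k) (fun k p => (T k p.1, R k p.2)) j (x, y) =
        (iter T j x, iter R j y)
  | 0, _, _ => rfl
  | j + 1, x, y => by
    show (fun k (p : X k × Y k) => (T k p.1, R k p.2)) j
        (iter (X := fun k => X k × Y k) _ j (x, y)) = _
    rw [iter_prod T R j x y]
    rfl

lemma nndist_prod {α β : Type*} [PseudoMetricSpace α] [PseudoMetricSpace β] (p q : α × β) :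
    nndist p q = max (nndist p.1 q.1) (nndist p.2 q.2) := by
  apply NNReal.coe_injective
  rw [coe_nndist, Prod.dist_eq, NNReal.coe_max, coe_nndist, coe_nndist]

lemma bowenDist_prod (n : ℕ) (p q : (X 0) × (Y 0)) :
    bowenDist (X := fun k => X k × Y k) (fun k p => (T k p.1, R k p.2)) n p q =
      max (bowenDist T n p.1 q.1) (bowenDist R n p.2 q.2) := by
  rw [bowenDist, bowenDist, bowenDist, ← NNReal.coe_max, NNReal.coe_inj, ← Finset.sup_sup]
  apply Finset.sup_congr rfl
  intro j _
  have hp : p = (p.1, p.2) := rfl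
  have hq : q = (q.1, q.2) := rfl
  rw [hp, hq, iter_prod T R j, iter_prod T R j]
  exact nndist_prod _ _

lemma birk_prod (n : ℕ) (p : (X 0) × (Y 0)) :
    birk (X := fun k => X k × Y k) (fun k p => (T k p.1, R k p.2))
        (fun k p => f k p.1 + g k p.2) n p =
      birk T f n p.1 + birk R g n p.2 := by
  rw [birk, birk, birk, ← Finset.sum_add_distrib]
  apply Finset.sum_congr rfl
  intro j _
  have hp : p = (p.1, p.2) := rfl
  rw [hp, iter_prod T R j]

lemma partSum_ne_top (T : ∀ k, X k → X (k + 1)) (f : ∀ k, X k → ℝ) (n : ℕ)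
    (F : Finset (X 0)) : partSum T f n F ≠ ⊤ := by
  rw [partSum]
  exact (ENNReal.sum_lt_top.2 fun x _ => ENNReal.ofReal_lt_top).ne

lemma partSum_prod (n : ℕ) (E : Finset (X 0)) (E' : Finset (Y 0)) :
    partSum (X := fun k => X k × Y k) (fun k p => (T k p.1, R k p.2))
        (fun k p => f k p.1 + g k p.2) n (E ×ˢ E') =
      partSum T f n E * partSum R g n E' := by
  rw [partSum, partSum, partSum, Finset.sum_product, Finset.sum_mul]
  apply Finset.sum_congr rfl
  intro x _
  rw [Finset.mul_sum]
  apply Finset.sum_congr rfl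
  intro y _
  rw [← ENNReal.ofReal_mul (Real.exp_nonneg _), ← Real.exp_add]
  congr 1
  rw [birk_prod]

lemma isSeparated_prod {n : ℕ} {ε : ℝ} {Z : Set (X 0)} {W : Set (Y 0)}
    {E : Finset (X 0)} {E' : Finset (Y 0)}
    (hE : IsSeparated T n ε Z E) (hE' : IsSeparated R n ε W E') :
    IsSeparated (X := fun k => X k × Y k) (fun k p => (T k p.1, R k p.2)) n ε
      (Z ×ˢ W) (E ×ˢ E') := by
  constructor
  · rw [Finset.coe_product]
    exact Set.prod_mono hE.1 hE'.1
  · intro p hp q hq hpq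
    rw [Finset.mem_product] at hp hq
    rw [bowenDist_prod]
    by_cases h : p.1 = q.1
    · have h2 : p.2 ≠ q.2 := fun h2 => hpq (Prod.ext h h2)
      exact lt_max_of_lt_right (hE'.2 p.2 hp.2 q.2 hq.2 h2)
    · exact lt_max_of_lt_left (hE.2 p.1 hp.1 q.1 hq.1 h)

lemma Pn_mul_le_Pn_prod (n : ℕ) (ε : ℝ) (Z : Set (X 0)) (W : Set (Y 0)) :
    Pn T f Z n ε * Pn R g W n ε ≤
      Pn (X := fun k => X k × Y k) (fun k p => (T k p.1, R k p.2))
        (fun k p => f k p.1 + g k p.2) (Z ×ˢ W) n ε := by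
  rw [Pn, ENNReal.iSup_mul]
  refine iSup_le fun E => ?_
  rw [ENNReal.iSup_mul]
  refine iSup_le fun hE => ?_
  rw [Pn, ENNReal.mul_iSup]
  refine iSup_le fun E' => ?_
  rw [ENNReal.mul_iSup]
  refine iSup_le fun hE' => ?_
  rw [← partSum_prod]
  exact le_iSup₂_of_le (E ×ˢ E') (isSeparated_prod hE hE') le_rfl

end Prod
end NDSAux
namespace NDSAux
open NDS

section Compact
variable {X : ℕ → Type*} [∀ k, MetricSpace (X k)] [∀ k, CompactSpace (X k)]
  {T : ∀ k, X k → X (k + 1)} {f : ∀ k, X k → ℝ}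

lemma exists_max_separated (hT : ∀ k, Continuous (T k)) (n : ℕ) {ε : ℝ} (hε : 0 < ε)
    (Z : Set (X 0)) :
    ∃ E : Finset (X 0), IsSeparated T n ε Z E ∧
      ∀ x ∈ Z, ∃ y ∈ E, bowenDist T n x y ≤ ε := by
  classical
  -- finite cover of X 0 by Bowen balls of radius ε/2
  have hcov : (Set.univ : Set (X 0)) ⊆ ⋃ x : X 0, bowenBall T n x (ε / 2) := by
    intro x _
    exact Set.mem_iUnion.2 ⟨x, by simp [bowenBall, bowenDist_self, half_pos hε]⟩
  have hopen : ∀ x : X 0, IsOpen (bowenBall T n x (ε / 2)) := by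
    intro x
    have : bowenBall T n x (ε / 2) =
        ⋂ j ∈ Finset.range n, (iter T j) ⁻¹' Metric.ball (iter T j x) (ε / 2) := by
      ext y
      simp only [bowenBall, Set.mem_setOf_eq, Set.mem_iInter, Set.mem_preimage,
        Metric.mem_ball, Finset.mem_range]
      rw [bowenDist_lt_iff (half_pos hε)]
      constructor
      · intro h j hj; rw [dist_comm]; exact h j hj
      · intro h j hj; rw [dist_comm]; exact h j hj
    rw [this]
    exact isOpen_biInter_finset fun j _ =>
      (Metric.isOpen_ball).preimage (continuous_iter hT j)
  obtain ⟨D, hD⟩ := isCompact_univ.elim_finite_subcover _ hopen hcov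
  -- every ε-separated set has cardinality at most D.card
  have hcard : ∀ E : Finset (X 0), IsSeparated T n ε Z E → E.card ≤ D.card := by
    intro E hE
    have hchoice : ∀ e : X 0, e ∈ E → ∃ d, d ∈ D ∧ bowenDist T n d e < ε / 2 := by
      intro e _
      have := hD (Set.mem_univ e)
      simp only [Set.mem_iUnion, bowenBall, Set.mem_setOf_eq] at this
      obtain ⟨d, hd, hlt⟩ := this
      exact ⟨d, hd, hlt⟩
    choose! φ hφD hφd using hchoice
    refine Finset.card_le_card_of_injOn φ (fun e he => hφD e he) ?_
    intro e he e' he' hee'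
    by_contra hne
    have h1 := hφd e he
    have h2 := hφd e' he'
    rw [hee'] at h1
    have := (bowenDist_triangle T n e (φ e') e').trans_lt
      (add_lt_add ((bowenDist_comm T n e (φ e')) ▸ h1) h2)
    have hsep := hE.2 e (by exact_mod_cast he) e' (by exact_mod_cast he') hne
    linarith
  -- pick a separated set of maximal cardinality
  set S : Set ℕ := {k | ∃ E : Finset (X 0), IsSeparated T n ε Z E ∧ E.card = k} with hS
  have hne : S.Nonempty := ⟨0, ∅, ⟨by simp, by simp⟩, rfl⟩
  have hbdd : BddAbove S := by
    refine ⟨D.card, fun k hk => ?_⟩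
    obtain ⟨E, hE, rfl⟩ := hk
    exact hcard E hE
  obtain ⟨E, hE, hEcard⟩ := Nat.sSup_mem hne hbdd
  refine ⟨E, hE, ?_⟩
  intro x hx
  by_contra hno
  push_neg at hno
  have hxE : x ∉ E := fun hxE => by
    have := hno x hxE
    rw [bowenDist_self] at this
    exact absurd this (not_lt.2 hε.le)
  have hsep' : IsSeparated T n ε Z (insert x E) := by
    constructor
    · rw [Finset.coe_insert]
      exact Set.insert_subset hx hE.1
    · intro a ha b hb hab
      rw [Finset.mem_insert] at ha hb
      rcases ha with rfl | ha
      · rcases hb with rfl | hb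
        · exact absurd rfl hab
        · exact hno b hb
      · rcases hb with rfl | hb
        · rw [bowenDist_comm]
          exact hno a ha
        · exact hE.2 a ha b hb hab
  have : E.card + 1 ∈ S := ⟨insert x E, hsep', Finset.card_insert_of_notMem hxE⟩
  have := le_csSup hbdd this
  omega

end Compact
end NDSAux
namespace NDSAux
open NDS

section Key
variable {X Y : ℕ → Type*} [∀ k, MetricSpace (X k)] [∀ k, MetricSpace (Y k)]
  [∀ k, CompactSpace (X k)] [∀ k, CompactSpace (Y k)]
  {T : ∀ k, X k → X (k + 1)} {R : ∀ k, Y k → Y (k + 1)}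
  {f : ∀ k, X k → ℝ} {g : ∀ k, Y k → ℝ}

lemma birk_diff_le {n : ℕ} {ε' γ : ℝ}
    (hmod : ∀ k, ∀ x y : X k, dist x y ≤ ε' → |f k x - f k y| ≤ γ)
    {x a : X 0} (hd : bowenDist T n x a ≤ ε') :
    birk T f n x - birk T f n a ≤ n * γ := by
  rw [birk, birk, ← Finset.sum_sub_distrib]
  calc ∑ j ∈ Finset.range n, (f j (iter T j x) - f j (iter T j a))
      ≤ ∑ j ∈ Finset.range n, γ := by
        refine Finset.sum_le_sum fun j hj => ?_
        exact (le_abs_self _).trans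
          (hmod j _ _ ((dist_iter_le_bowenDist (Finset.mem_range.1 hj) x a).trans hd))
    _ = n * γ := by simp [mul_comm]

lemma key_partSum_le {n : ℕ} {ε ε' γf γg : ℝ} (h2 : 2 * ε' ≤ ε)
    (hfmod : ∀ k, ∀ x y : X k, dist x y ≤ ε' → |f k x - f k y| ≤ γf)
    (hgmod : ∀ k, ∀ x y : Y k, dist x y ≤ ε' → |g k x - g k y| ≤ γg)
    {Z : Set (X 0)} {W : Set (Y 0)} {A : Finset (X 0)} {B : Finset (Y 0)}
    (hAspan : ∀ x ∈ Z, ∃ a ∈ A, bowenDist T n x a ≤ ε')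
    (hBspan : ∀ y ∈ W, ∃ b ∈ B, bowenDist R n y b ≤ ε')
    {E : Finset ((X 0) × (Y 0))}
    (hE : IsSeparated (X := fun k => X k × Y k) (fun k p => (T k p.1, R k p.2)) n ε
      (Z ×ˢ W) E) :
    partSum (X := fun k => X k × Y k) (fun k p => (T k p.1, R k p.2))
        (fun k p => f k p.1 + g k p.2) n E ≤
      ENNReal.ofReal (Real.exp (n * (γf + γg))) * (partSum T f n A * partSum R g n B) := by
  classical
  have hmem : ∀ p : (X 0) × (Y 0), p ∈ E → p.1 ∈ Z ∧ p.2 ∈ W := by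
    intro p hp
    have := hE.1 (by exact_mod_cast hp)
    exact ⟨this.1, this.2⟩
  have hchoice : ∀ p : (X 0) × (Y 0), p ∈ E → ∃ q : (X 0) × (Y 0),
      (q.1 ∈ A ∧ q.2 ∈ B) ∧ bowenDist T n p.1 q.1 ≤ ε' ∧ bowenDist R n p.2 q.2 ≤ ε' := by
    intro p hp
    obtain ⟨a, ha, hda⟩ := hAspan p.1 (hmem p hp).1
    obtain ⟨b, hb, hdb⟩ := hBspan p.2 (hmem p hp).2
    exact ⟨(a, b), ⟨ha, hb⟩, hda, hdb⟩
  choose! φ hφAB hφ1 hφ2 using hchoice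
  have hinj : Set.InjOn φ E := by
    intro p hp q hq hpq
    by_contra hne
    have hsep := hE.2 p hp q hq hne
    rw [bowenDist_prod] at hsep
    have hq1 : bowenDist T n (φ p).1 q.1 ≤ ε' := by
      rw [hpq, bowenDist_comm]
      exact hφ1 q hq
    have hq2 : bowenDist R n (φ p).2 q.2 ≤ ε' := by
      rw [hpq, bowenDist_comm]
      exact hφ2 q hq
    have h1 : bowenDist T n p.1 q.1 ≤ 2 * ε' := by
      have := (bowenDist_triangle T n p.1 (φ p).1 q.1).trans
        (add_le_add (hφ1 p hp) hq1)
      linarith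
    have h2' : bowenDist R n p.2 q.2 ≤ 2 * ε' := by
      have := (bowenDist_triangle R n p.2 (φ p).2 q.2).trans
        (add_le_add (hφ2 p hp) hq2)
      linarith
    have : max (bowenDist T n p.1 q.1) (bowenDist R n p.2 q.2) ≤ ε :=
      max_le (h1.trans h2) (h2'.trans h2)
    exact absurd hsep (not_lt.2 this)
  calc partSum (X := fun k => X k × Y k) (fun k p => (T k p.1, R k p.2))
        (fun k p => f k p.1 + g k p.2) n E
      ≤ ∑ p ∈ E, ENNReal.ofReal (Real.exp (n * (γf + γg)) *
          Real.exp (birk (X := fun k => X k × Y k) (fun k p => (T k p.1, R k p.2))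
            (fun k p => f k p.1 + g k p.2) n (φ p))) := by
        rw [partSum]
        refine Finset.sum_le_sum fun p hp => ?_
        rw [← Real.exp_add]
        refine ENNReal.ofReal_le_ofReal (Real.exp_le_exp.2 ?_)
        rw [birk_prod, birk_prod]
        have hf' := birk_diff_le (T := T) hfmod (hφ1 p hp)
        have hg' := birk_diff_le (T := R) hgmod (hφ2 p hp)
        have : (n : ℝ) * (γf + γg) = n * γf + n * γg := by ring
        linarith
    _ = ENNReal.ofReal (Real.exp (n * (γf + γg))) *
          ∑ p ∈ E, ENNReal.ofReal (Real.exp (birk (X := fun k => X k × Y k)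
            (fun k p => (T k p.1, R k p.2)) (fun k p => f k p.1 + g k p.2) n (φ p))) := by
        rw [Finset.mul_sum]
        exact Finset.sum_congr rfl fun p _ => ENNReal.ofReal_mul (Real.exp_nonneg _)
    _ ≤ ENNReal.ofReal (Real.exp (n * (γf + γg))) * (partSum T f n A * partSum R g n B) := by
        refine mul_le_mul' le_rfl ?_
        rw [← partSum_prod (T := T) (R := R) (f := f) (g := g)]
        have hinj' : ∀ p ∈ E, ∀ q ∈ E, φ p = φ q → p = q := fun p hp q hq h =>
          hinj (Finset.mem_coe.2 hp) (Finset.mem_coe.2 hq) h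
        rw [partSum, ← Finset.sum_image (g := φ) (f := fun q => ENNReal.ofReal (Real.exp
          (birk (X := fun k => X k × Y k) (fun k p => (T k p.1, R k p.2))
            (fun k p => f k p.1 + g k p.2) n q))) hinj']
        refine Finset.sum_le_sum_of_subset ?_
        intro q hq
        rw [Finset.mem_image] at hq
        obtain ⟨p, hp, rfl⟩ := hq
        rw [Finset.mem_product]
        exact hφAB p hp

lemma Pn_prod_le (hT : ∀ k, Continuous (T k)) (hR : ∀ k, Continuous (R k))
    {n : ℕ} {ε ε' γf γg : ℝ} (hε' : 0 < ε') (h2 : 2 * ε' ≤ ε)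
    (hfmod : ∀ k, ∀ x y : X k, dist x y ≤ ε' → |f k x - f k y| ≤ γf)
    (hgmod : ∀ k, ∀ x y : Y k, dist x y ≤ ε' → |g k x - g k y| ≤ γg)
    (Z : Set (X 0)) (W : Set (Y 0)) :
    Pn (X := fun k => X k × Y k) (fun k p => (T k p.1, R k p.2))
        (fun k p => f k p.1 + g k p.2) (Z ×ˢ W) n ε ≤
      ENNReal.ofReal (Real.exp (n * (γf + γg))) * (Pn T f Z n ε' * Pn R g W n ε') := by
  obtain ⟨A, hAsep, hAspan⟩ := exists_max_separated hT n hε' Z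
  obtain ⟨B, hBsep, hBspan⟩ := exists_max_separated hR n hε' W
  rw [Pn]
  refine iSup₂_le fun E hE => ?_
  refine (key_partSum_le h2 hfmod hgmod hAspan hBspan hE).trans ?_
  refine mul_le_mul' le_rfl (mul_le_mul' ?_ ?_)
  · exact le_iSup₂_of_le A hAsep le_rfl
  · exact le_iSup₂_of_le B hBsep le_rfl

end Key
end NDSAux
namespace NDSAux
open NDS

lemma lowRate_mono {u v : ℕ → ℝ≥0∞} (h : ∀ n, u n ≤ v n) : lowRate u ≤ lowRate v := by
  refine Filter.liminf_le_liminf (Eventually.of_forall fun n => ?_)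
  exact ereal_mul_le_mul (inv_nonneg.2 (Nat.cast_nonneg n)) (ENNReal.log_monotone (h n))

lemma upRate_mono {u v : ℕ → ℝ≥0∞} (h : ∀ n, u n ≤ v n) : upRate u ≤ upRate v := by
  refine Filter.limsup_le_limsup (Eventually.of_forall fun n => ?_)
  exact ereal_mul_le_mul (inv_nonneg.2 (Nat.cast_nonneg n)) (ENNReal.log_monotone (h n))

lemma liminf_const_add (c : ℝ) (s : ℕ → EReal) :
    Filter.atTop.liminf (fun n => (c : EReal) + s n) ≤ (c : EReal) + Filter.atTop.liminf s := by
  have h := EReal.liminf_add_le (f := Filter.atTop) (u := fun _ : ℕ => (c : EReal)) (v := s)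
    (by rw [Filter.limsup_const]; exact Or.inl (EReal.coe_ne_bot c))
    (by rw [Filter.limsup_const]; exact Or.inl (EReal.coe_ne_top c))
  rw [Filter.limsup_const] at h
  exact h

lemma limsup_const_add (c : ℝ) (s : ℕ → EReal) :
    Filter.atTop.limsup (fun n => (c : EReal) + s n) ≤ (c : EReal) + Filter.atTop.limsup s := by
  have h := EReal.limsup_add_le (f := Filter.atTop) (u := fun _ : ℕ => (c : EReal)) (v := s)
    (by rw [Filter.limsup_const]; exact Or.inl (EReal.coe_ne_bot c))
    (by rw [Filter.limsup_const]; exact Or.inl (EReal.coe_ne_top c))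
  rw [Filter.limsup_const] at h
  exact h

section Rates
variable {X Y : ℕ → Type*} [∀ k, MetricSpace (X k)] [∀ k, MetricSpace (Y k)]
  [∀ k, CompactSpace (X k)] [∀ k, CompactSpace (Y k)]
  {T : ∀ k, X k → X (k + 1)} {R : ∀ k, Y k → Y (k + 1)}
  {f : ∀ k, X k → ℝ} {g : ∀ k, Y k → ℝ}

lemma Pn_anti {Z : Set (X 0)} {n : ℕ} {ε₁ ε₂ : ℝ} (h : ε₁ ≤ ε₂) :
    Pn T f Z n ε₂ ≤ Pn T f Z n ε₁ := by
  refine iSup₂_le fun E hE => le_iSup₂_of_le E ?_ le_rfl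
  exact ⟨hE.1, fun x hx y hy hxy => h.trans_lt (hE.2 x hx y hy hxy)⟩

lemma rate_term_lower (Z : Set (X 0)) (W : Set (Y 0)) (n : ℕ) (ε : ℝ) :
    (((n : ℝ)⁻¹ : ℝ) : EReal) * ENNReal.log (Pn T f Z n ε) +
      (((n : ℝ)⁻¹ : ℝ) : EReal) * ENNReal.log (Pn R g W n ε) ≤
    (((n : ℝ)⁻¹ : ℝ) : EReal) * ENNReal.log
      (Pn (X := fun k => X k × Y k) (fun k p => (T k p.1, R k p.2))
        (fun k p => f k p.1 + g k p.2) (Z ×ˢ W) n ε) := by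
  rw [← ereal_distrib (inv_nonneg.2 (Nat.cast_nonneg n)), ← ENNReal.log_mul_add]
  exact ereal_mul_le_mul (inv_nonneg.2 (Nat.cast_nonneg n))
    (ENNReal.log_monotone (Pn_mul_le_Pn_prod n ε Z W))

lemma rate_term_upper (hT : ∀ k, Continuous (T k)) (hR : ∀ k, Continuous (R k))
    {ε ε' γf γg : ℝ} (hε' : 0 < ε') (h2 : 2 * ε' ≤ ε)
    (hfmod : ∀ k, ∀ x y : X k, dist x y ≤ ε' → |f k x - f k y| ≤ γf)
    (hgmod : ∀ k, ∀ x y : Y k, dist x y ≤ ε' → |g k x - g k y| ≤ γg)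
    (Z : Set (X 0)) (W : Set (Y 0)) {n : ℕ} (hn : 1 ≤ n) :
    (((n : ℝ)⁻¹ : ℝ) : EReal) * ENNReal.log
      (Pn (X := fun k => X k × Y k) (fun k p => (T k p.1, R k p.2))
        (fun k p => f k p.1 + g k p.2) (Z ×ˢ W) n ε) ≤
    ((γf + γg : ℝ) : EReal) +
      ((((n : ℝ)⁻¹ : ℝ) : EReal) * ENNReal.log (Pn T f Z n ε') +
        (((n : ℝ)⁻¹ : ℝ) : EReal) * ENNReal.log (Pn R g W n ε')) := by
  have hnR : (0 : ℝ) < (n : ℝ) := by exact_mod_cast hn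
  have hlog := ENNReal.log_monotone (Pn_prod_le (n := n) hT hR hε' h2 hfmod hgmod Z W)
  rw [ENNReal.log_mul_add, ENNReal.log_mul_add,
    ENNReal.log_ofReal_of_pos (Real.exp_pos _), Real.log_exp] at hlog
  have hmul := ereal_mul_le_mul (inv_nonneg.2 hnR.le) hlog
  refine hmul.trans (le_of_eq ?_)
  rw [ereal_distrib (inv_nonneg.2 hnR.le), ereal_distrib (inv_nonneg.2 hnR.le),
    ← EReal.coe_mul]
  congr 2
  field_simp

end Rates
end NDSAux

/-- **product rules for the lower and upper topological pressures.** For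
equicontinuous potentials (so that the lower and upper topological pressures exist and are
given by the separated versions `P_low`, `P_up`),
`P_L(T,f,Z) + P_L(R,g,W) ≤ P_L(T×R,f∔g,Z×W) ≤ P_L(T,f,Z) + P_U(R,g,W)` and
`P_L(T,f,Z) + P_U(R,g,W) ≤ P_U(T×R,f∔g,Z×W) ≤ P_U(T,f,Z) + P_U(R,g,W)`, provided the sums
are not of the form `(+∞)+(−∞)`. -/
theorem lower_upper_pressure_product_rule {X Y : ℕ → Type*} [∀ k, MetricSpace (X k)]
    [∀ k, CompactSpace (X k)] [∀ k, MetricSpace (Y k)] [∀ k, CompactSpace (Y k)]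
    (T : ∀ k, X k → X (k + 1)) (hT : ∀ k, Continuous (T k))
    (R : ∀ k, Y k → Y (k + 1)) (hR : ∀ k, Continuous (R k))
    (f : ∀ k, X k → ℝ) (hf : ∀ k, Continuous (f k)) (hfe : NDS.EquicontPotential f)
    (g : ∀ k, Y k → ℝ) (hg : ∀ k, Continuous (g k)) (hge : NDS.EquicontPotential g)
    (Z : Set (X 0)) (W : Set (Y 0))
    (h₁ : NDS.AddCompat (NDS.Plow T f Z) (NDS.Plow R g W))
    (h₂ : NDS.AddCompat (NDS.Plow T f Z) (NDS.Pup R g W))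
    (h₃ : NDS.AddCompat (NDS.Pup T f Z) (NDS.Pup R g W)) :
    (NDS.Plow T f Z + NDS.Plow R g W ≤
      NDS.Plow (X := fun k => X k × Y k) (fun k p => (T k p.1, R k p.2))
        (fun k p => f k p.1 + g k p.2) (Z ×ˢ W) ∧
     NDS.Plow (X := fun k => X k × Y k) (fun k p => (T k p.1, R k p.2))
        (fun k p => f k p.1 + g k p.2) (Z ×ˢ W) ≤
      NDS.Plow T f Z + NDS.Pup R g W) ∧
    (NDS.Plow T f Z + NDS.Pup R g W ≤
      NDS.Pup (X := fun k => X k × Y k) (fun k p => (T k p.1, R k p.2))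
        (fun k p => f k p.1 + g k p.2) (Z ×ˢ W) ∧
     NDS.Pup (X := fun k => X k × Y k) (fun k p => (T k p.1, R k p.2))
        (fun k p => f k p.1 + g k p.2) (Z ×ˢ W) ≤
      NDS.Pup T f Z + NDS.Pup R g W) := by
  classical
  -- rate sequences
  set uX : ℝ → ℕ → EReal := fun ε n =>
    (((n : ℝ)⁻¹ : ℝ) : EReal) * ENNReal.log (NDS.Pn T f Z n ε) with huX
  set uY : ℝ → ℕ → EReal := fun ε n =>
    (((n : ℝ)⁻¹ : ℝ) : EReal) * ENNReal.log (NDS.Pn R g W n ε) with huY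
  set uP : ℝ → ℕ → EReal := fun ε n =>
    (((n : ℝ)⁻¹ : ℝ) : EReal) * ENNReal.log
      (NDS.Pn (X := fun k => X k × Y k) (fun k p => (T k p.1, R k p.2))
        (fun k p => f k p.1 + g k p.2) (Z ×ˢ W) n ε) with huP
  have hXrateL : ∀ ε : ℝ, NDS.lowRate (fun n => NDS.Pn T f Z n ε) = Filter.atTop.liminf (uX ε) := fun _ => rfl
  -- pointwise lower bound
  have hptw : ∀ (ε : ℝ) (n : ℕ), uX ε n + uY ε n ≤ uP ε n := fun ε n =>
    NDSAux.rate_term_lower Z W n ε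
  -- Part 1 : Plow + Plow ≤ Plow prod
  have ineq1 : NDS.Plow T f Z + NDS.Plow R g W ≤
      NDS.Plow (X := fun k => X k × Y k) (fun k p => (T k p.1, R k p.2))
        (fun k p => f k p.1 + g k p.2) (Z ×ˢ W) := by
    refine EReal.add_le_of_forall_lt fun a ha b hb => ?_
    rw [NDS.Plow, lt_iSup_iff] at ha hb
    obtain ⟨ε₁, ha⟩ := ha
    obtain ⟨ε₂, hb⟩ := hb
    rw [lt_iSup_iff] at ha hb
    obtain ⟨hε₁, ha⟩ := ha
    obtain ⟨hε₂, hb⟩ := hb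
    have hε : 0 < min ε₁ ε₂ := lt_min hε₁ hε₂
    have ha' : a ≤ Filter.atTop.liminf (uX (min ε₁ ε₂)) :=
      ha.le.trans (NDSAux.lowRate_mono fun n => NDSAux.Pn_anti (min_le_left _ _))
    have hb' : b ≤ Filter.atTop.liminf (uY (min ε₁ ε₂)) :=
      hb.le.trans (NDSAux.lowRate_mono fun n => NDSAux.Pn_anti (min_le_right _ _))
    calc a + b ≤ Filter.atTop.liminf (uX (min ε₁ ε₂)) + Filter.atTop.liminf (uY (min ε₁ ε₂)) :=
          add_le_add ha' hb'
      _ ≤ Filter.atTop.liminf (uX (min ε₁ ε₂) + uY (min ε₁ ε₂)) := EReal.le_liminf_add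
      _ ≤ Filter.atTop.liminf (uP (min ε₁ ε₂)) :=
          Filter.liminf_le_liminf (Filter.Eventually.of_forall fun n => hptw _ n)
      _ ≤ _ := le_iSup₂_of_le (min ε₁ ε₂) hε le_rfl
  -- Part 3 : Plow + Pup ≤ Pup prod
  have ineq3 : NDS.Plow T f Z + NDS.Pup R g W ≤
      NDS.Pup (X := fun k => X k × Y k) (fun k p => (T k p.1, R k p.2))
        (fun k p => f k p.1 + g k p.2) (Z ×ˢ W) := by
    refine EReal.add_le_of_forall_lt fun a ha b hb => ?_
    rw [NDS.Plow, lt_iSup_iff] at ha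
    rw [NDS.Pup, lt_iSup_iff] at hb
    obtain ⟨ε₁, ha⟩ := ha
    obtain ⟨ε₂, hb⟩ := hb
    rw [lt_iSup_iff] at ha hb
    obtain ⟨hε₁, ha⟩ := ha
    obtain ⟨hε₂, hb⟩ := hb
    have hε : 0 < min ε₁ ε₂ := lt_min hε₁ hε₂
    have ha' : a ≤ Filter.atTop.liminf (uX (min ε₁ ε₂)) :=
      ha.le.trans (NDSAux.lowRate_mono fun n => NDSAux.Pn_anti (min_le_left _ _))
    have hb' : b ≤ Filter.atTop.limsup (uY (min ε₁ ε₂)) :=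
      hb.le.trans (NDSAux.upRate_mono fun n => NDSAux.Pn_anti (min_le_right _ _))
    calc a + b ≤ Filter.atTop.liminf (uX (min ε₁ ε₂)) + Filter.atTop.limsup (uY (min ε₁ ε₂)) :=
          add_le_add ha' hb'
      _ = Filter.atTop.limsup (uY (min ε₁ ε₂)) + Filter.atTop.liminf (uX (min ε₁ ε₂)) :=
          add_comm _ _
      _ ≤ Filter.atTop.limsup (uY (min ε₁ ε₂) + uX (min ε₁ ε₂)) := EReal.le_limsup_add
      _ ≤ Filter.atTop.limsup (uP (min ε₁ ε₂)) := by
          refine Filter.limsup_le_limsup (Filter.Eventually.of_forall fun n => ?_)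
          show uY (min ε₁ ε₂) n + uX (min ε₁ ε₂) n ≤ uP (min ε₁ ε₂) n
          rw [add_comm]
          exact hptw _ n
      _ ≤ _ := le_iSup₂_of_le (min ε₁ ε₂) hε le_rfl
  -- a reusable upper-bound engine
  have upper : ∀ (lim : (ℕ → EReal) → EReal), (lim = fun s => Filter.atTop.liminf s) ∨
      (lim = fun s => Filter.atTop.limsup s) → True := fun _ _ => trivial
  -- Part 2 : Plow prod ≤ Plow + Pup
  have ineq2 : NDS.Plow (X := fun k => X k × Y k) (fun k p => (T k p.1, R k p.2))
        (fun k p => f k p.1 + g k p.2) (Z ×ˢ W) ≤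
      NDS.Plow T f Z + NDS.Pup R g W := by
    by_cases hS : NDS.Plow T f Z + NDS.Pup R g W = ⊤
    · rw [hS]; exact le_top
    have hXt : NDS.Plow T f Z ≠ ⊤ := by
      intro h
      have hYb : NDS.Pup R g W ≠ ⊥ := fun h' => h₂.1 ⟨h, h'⟩
      exact hS (by rw [h]; exact EReal.top_add_of_ne_bot hYb)
    have hYt : NDS.Pup R g W ≠ ⊤ := by
      intro h
      have hXb : NDS.Plow T f Z ≠ ⊥ := fun h' => h₂.2 ⟨h', h⟩
      exact hS (by rw [h]; exact EReal.add_top_of_ne_bot hXb)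
    refine iSup₂_le fun ε hε => ?_
    refine NDSAux.ereal_le_of_forall fun γ hγ => ?_
    obtain ⟨δf, hδf, hf'⟩ := hfe (γ / 2) (by linarith)
    obtain ⟨δg, hδg, hg'⟩ := hge (γ / 2) (by linarith)
    set ε' := min (ε / 2) (min (δf / 2) (δg / 2)) with hε'def
    have hε' : 0 < ε' := lt_min (by linarith) (lt_min (by linarith) (by linarith))
    have h2 : 2 * ε' ≤ ε := by
      have := min_le_left (ε / 2) (min (δf / 2) (δg / 2))
      rw [← hε'def] at this
      linarith
    have hfmod : ∀ k, ∀ x y : X k, dist x y ≤ ε' → |f k x - f k y| ≤ γ / 2 := by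
      intro k x y h
      refine (hf' k x y (lt_of_le_of_lt h ?_)).le
      have h1 : ε' ≤ δf / 2 := le_trans (min_le_right _ _) (min_le_left _ _)
      linarith
    have hgmod : ∀ k, ∀ x y : Y k, dist x y ≤ ε' → |g k x - g k y| ≤ γ / 2 := by
      intro k x y h
      refine (hg' k x y (lt_of_le_of_lt h ?_)).le
      have h1 : ε' ≤ δg / 2 := le_trans (min_le_right _ _) (min_le_right _ _)
      linarith
    have hlX : Filter.atTop.liminf (uX ε') ≤ NDS.Plow T f Z :=
      le_iSup₂_of_le ε' hε' le_rfl
    have hlY : Filter.atTop.limsup (uY ε') ≤ NDS.Pup R g W :=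
      le_iSup₂_of_le ε' hε' le_rfl
    have hmid : Filter.atTop.liminf (uX ε' + uY ε') ≤
        Filter.atTop.liminf (uX ε') + Filter.atTop.limsup (uY ε') := by
      have hswap : uX ε' + uY ε' = uY ε' + uX ε' := by
        funext n; exact add_comm _ _
      rw [hswap]
      have := EReal.liminf_add_le (f := Filter.atTop) (u := uY ε') (v := uX ε')
        (Or.inr (hlX.trans_lt hXt.lt_top).ne)
        (Or.inl (hlY.trans_lt hYt.lt_top).ne)
      exact this.trans_eq (add_comm _ _)
    have hγeq : γ / 2 + γ / 2 = γ := by ring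
    calc NDS.lowRate (fun n =>
          NDS.Pn (X := fun k => X k × Y k) (fun k p => (T k p.1, R k p.2))
            (fun k p => f k p.1 + g k p.2) (Z ×ˢ W) n ε)
        ≤ Filter.atTop.liminf (fun n => ((γ / 2 + γ / 2 : ℝ) : EReal) + (uX ε' + uY ε') n) := by
          refine Filter.liminf_le_liminf ?_
          filter_upwards [Filter.eventually_ge_atTop 1] with n hn
          exact NDSAux.rate_term_upper hT hR hε' h2 hfmod hgmod Z W hn
      _ ≤ ((γ / 2 + γ / 2 : ℝ) : EReal) + Filter.atTop.liminf (uX ε' + uY ε') :=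
          NDSAux.liminf_const_add _ _
      _ ≤ (γ : EReal) + (NDS.Plow T f Z + NDS.Pup R g W) := by
          rw [hγeq]
          exact add_le_add le_rfl (hmid.trans (add_le_add hlX hlY))
  -- Part 4 : Pup prod ≤ Pup + Pup
  have ineq4 : NDS.Pup (X := fun k => X k × Y k) (fun k p => (T k p.1, R k p.2))
        (fun k p => f k p.1 + g k p.2) (Z ×ˢ W) ≤
      NDS.Pup T f Z + NDS.Pup R g W := by
    by_cases hS : NDS.Pup T f Z + NDS.Pup R g W = ⊤
    · rw [hS]; exact le_top
    have hXt : NDS.Pup T f Z ≠ ⊤ := by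
      intro h
      have hYb : NDS.Pup R g W ≠ ⊥ := fun h' => h₃.1 ⟨h, h'⟩
      exact hS (by rw [h]; exact EReal.top_add_of_ne_bot hYb)
    have hYt : NDS.Pup R g W ≠ ⊤ := by
      intro h
      have hXb : NDS.Pup T f Z ≠ ⊥ := fun h' => h₃.2 ⟨h', h⟩
      exact hS (by rw [h]; exact EReal.add_top_of_ne_bot hXb)
    refine iSup₂_le fun ε hε => ?_
    refine NDSAux.ereal_le_of_forall fun γ hγ => ?_
    obtain ⟨δf, hδf, hf'⟩ := hfe (γ / 2) (by linarith)
    obtain ⟨δg, hδg, hg'⟩ := hge (γ / 2) (by linarith)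
    set ε' := min (ε / 2) (min (δf / 2) (δg / 2)) with hε'def
    have hε' : 0 < ε' := lt_min (by linarith) (lt_min (by linarith) (by linarith))
    have h2 : 2 * ε' ≤ ε := by
      have := min_le_left (ε / 2) (min (δf / 2) (δg / 2))
      rw [← hε'def] at this
      linarith
    have hfmod : ∀ k, ∀ x y : X k, dist x y ≤ ε' → |f k x - f k y| ≤ γ / 2 := by
      intro k x y h
      refine (hf' k x y (lt_of_le_of_lt h ?_)).le
      have h1 : ε' ≤ δf / 2 := le_trans (min_le_right _ _) (min_le_left _ _)
      linarith
    have hgmod : ∀ k, ∀ x y : Y k, dist x y ≤ ε' → |g k x - g k y| ≤ γ / 2 := by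
      intro k x y h
      refine (hg' k x y (lt_of_le_of_lt h ?_)).le
      have h1 : ε' ≤ δg / 2 := le_trans (min_le_right _ _) (min_le_right _ _)
      linarith
    have hlX : Filter.atTop.limsup (uX ε') ≤ NDS.Pup T f Z :=
      le_iSup₂_of_le ε' hε' le_rfl
    have hlY : Filter.atTop.limsup (uY ε') ≤ NDS.Pup R g W :=
      le_iSup₂_of_le ε' hε' le_rfl
    have hmid : Filter.atTop.limsup (uX ε' + uY ε') ≤
        Filter.atTop.limsup (uX ε') + Filter.atTop.limsup (uY ε') :=
      EReal.limsup_add_le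
        (Or.inr (hlY.trans_lt hYt.lt_top).ne)
        (Or.inl (hlX.trans_lt hXt.lt_top).ne)
    have hγeq : γ / 2 + γ / 2 = γ := by ring
    calc NDS.upRate (fun n =>
          NDS.Pn (X := fun k => X k × Y k) (fun k p => (T k p.1, R k p.2))
            (fun k p => f k p.1 + g k p.2) (Z ×ˢ W) n ε)
        ≤ Filter.atTop.limsup (fun n => ((γ / 2 + γ / 2 : ℝ) : EReal) + (uX ε' + uY ε') n) := by
          refine Filter.limsup_le_limsup ?_
          filter_upwards [Filter.eventually_ge_atTop 1] with n hn
          exact NDSAux.rate_term_upper hT hR hε' h2 hfmod hgmod Z W hn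
      _ ≤ ((γ / 2 + γ / 2 : ℝ) : EReal) + Filter.atTop.limsup (uX ε' + uY ε') :=
          NDSAux.limsup_const_add _ _
      _ ≤ (γ : EReal) + (NDS.Pup T f Z + NDS.Pup R g W) := by
          rw [hγeq]
          exact add_le_add le_rfl (hmid.trans (add_le_add hlX hlY))
  exact ⟨⟨ineq1, ineq2⟩, ⟨ineq3, ineq4⟩⟩
end
end

section
/- Invariance under equiconjugacies: Let (X,T) and (Y,R) be NDSs, Z ⊂ X_0, and let g be an equicontinuous potential on Y. For each pressure P ∈ {Q_low, Q_up, P_low, P_up, P^B, P^P}: (1) if π = {π_k} is an equisemiconjugacy from (X,T) to (Y,R), then P(T, π*g, Z) ≥ P(R, g, π_0(Z)); (2) if π is an equiconjugacy, then P(T, π*g, Z) = P(R, g, π_0(Z)). -/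
open Filter Set
open scoped ENNReal NNReal

noncomputable section

/-!
An equisemiconjugacy `π` intertwines the Birkhoff sums of `g` and `π*g`, and `π 0` maps
`d_n^T`-balls of radius `δ` into `d_n^R`-balls of radius `ε`, uniformly in `n`. Hence
spanning sets and Bowen covers of `Z` push forward to `π 0 '' Z`, while separated sets and
packings of `π 0 '' Z` lift to `Z` through a section of `π 0`, with the same weights. So every
pressure of `(R, g, π 0 '' Z)` at scale `ε` is bounded by the one of `(T, π*g, Z)` at scale `δ`.
For an equiconjugacy the inverse `σ` is again an equisemiconjugacy with `σ*(π*g) = g`, which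
gives the reverse inequalities.
-/

lemma Finset.exists_injOn_image_eq_of_subset_image {α β : Type*} [DecidableEq β] {f : α → β}
    {s : Set α} {t : Finset β} (h : ↑t ⊆ f '' s) :
    ∃ u : Finset α, ↑u ⊆ s ∧ Set.InjOn f u ∧ u.image f = t := by
  obtain ⟨u, hus, hbij⟩ := Set.SurjOn.exists_bijOn_subset h
  have hfin : u.Finite := Set.Finite.of_finite_image (hbij.image_eq ▸ t.finite_toSet) hbij.injOn
  refine ⟨hfin.toFinset, by simpa using hus, by simpa using hbij.injOn, ?_⟩
  exact Finset.coe_injective (by simpa using hbij.image_eq)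

lemma ENNReal.tsum_image_le {α β : Type*} (f : β → ℝ≥0∞) (g : α → β) (s : Set α) :
    ∑' y : g '' s, f y ≤ ∑' x : s, f (g x) := by
  obtain ⟨u, hus, hbij⟩ := Set.exists_subset_bijOn s g
  rw [← hbij.image_eq, tsum_image f hbij.injOn]
  exact ENNReal.tsum_mono_subtype (f ∘ g) hus

lemma iSup₂_pos_le_iSup₂_pos {α : Type*} [CompleteLattice α] {F G : ℝ → α}
    (h : ∀ ε > 0, ∃ δ > 0, F ε ≤ G δ) : ⨆ (ε : ℝ) (_ : 0 < ε), F ε ≤ ⨆ (δ : ℝ) (_ : 0 < δ), G δ :=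
  iSup₂_le fun ε hε => let ⟨δ, hδ, hFG⟩ := h ε hε; le_iSup₂_of_le δ hδ hFG

namespace NDS

lemma lowRate_mono {u v : ℕ → ℝ≥0∞} (h : ∀ n, u n ≤ v n) : lowRate u ≤ lowRate v :=
  liminf_le_liminf (Eventually.of_forall fun n =>
    mul_le_mul_of_nonneg_left (ENNReal.log_monotone (h n)) (by positivity))

lemma upRate_mono {u v : ℕ → ℝ≥0∞} (h : ∀ n, u n ≤ v n) : upRate u ≤ upRate v :=
  limsup_le_limsup (Eventually.of_forall fun n =>
    mul_le_mul_of_nonneg_left (ENNReal.log_monotone (h n)) (by positivity))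

lemma crit_mono {M M' : ℝ → ℝ≥0∞} (h : ∀ s, M s ≤ M' s) : crit M ≤ crit M' :=
  sInf_le_sInf (image_mono fun s hs => le_zero_iff.mp (hs ▸ h s))

variable {X Y : ℕ → Type*} {T : ∀ k, X k → X (k + 1)} {R : ∀ k, Y k → Y (k + 1)}

section Semiconj

variable {π : ∀ k, X k → Y k} (hsemi : ∀ k, ∀ x : X k, R k (π k x) = π (k + 1) (T k x))
include hsemi

lemma iter_semiconj (n : ℕ) (x : X 0) : iter R n (π 0 x) = π n (iter T n x) := by
  induction n with
  | zero => rfl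
  | succ n ih => exact (congrArg (R n) ih).trans (hsemi n _)

lemma birk_semiconj (g : ∀ k, Y k → ℝ) (n : ℕ) (x : X 0) :
    birk R g n (π 0 x) = birk T (fun k z => g k (π k z)) n x :=
  Finset.sum_congr rfl fun j _ => by rw [iter_semiconj hsemi]

lemma semiconj_of_inverse {σ : ∀ k, Y k → X k} (hl : ∀ k, Function.LeftInverse (σ k) (π k))
    (hr : ∀ k, Function.RightInverse (σ k) (π k)) (k : ℕ) (y : Y k) :
    T k (σ k y) = σ (k + 1) (R k y) := by
  rw [← hr k y, hsemi, hl, hl]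

end Semiconj

variable {f : ∀ k, X k → ℝ} {g : ∀ k, Y k → ℝ} {p : X 0 → Y 0}

lemma partSum_image_le [DecidableEq (Y 0)] {n : ℕ} (hbirk : ∀ x, birk R g n (p x) = birk T f n x)
    (F : Finset (X 0)) : partSum R g n (F.image p) ≤ partSum T f n F :=
  (Finset.sum_image_le_of_nonneg fun _ _ => zero_le).trans_eq
    (Finset.sum_congr rfl fun x _ => by rw [hbirk])

lemma ballSum_image_le (hbirk : ∀ n x, birk R g n (p x) = birk T f n x) (s : ℝ)
    (C : Set (X 0 × ℕ)) : ballSum R g s (Prod.map p id '' C) ≤ ballSum T f s C :=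
  (ENNReal.tsum_image_le (fun q : Y 0 × ℕ => ENNReal.ofReal
    (Real.exp (-(q.2 : ℝ) * s + birk R g q.2 q.1))) _ C).trans_eq
    (tsum_congr fun q => by simp only [Prod.map_fst, Prod.map_snd, id_eq, hbirk])

variable [∀ k, MetricSpace (X k)] [∀ k, MetricSpace (Y k)]

lemma bowenDist_le_iff {n : ℕ} {x y : X 0} {ε : ℝ} (hε : 0 ≤ ε) :
    bowenDist T n x y ≤ ε ↔ ∀ j < n, dist (iter T j x) (iter T j y) ≤ ε := by
  lift ε to ℝ≥0 using hε
  simp only [bowenDist, NNReal.coe_le_coe, Finset.sup_le_iff, Finset.mem_range, ← coe_nndist]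

def BowenEquicontinuous (T : ∀ k, X k → X (k + 1)) (R : ∀ k, Y k → Y (k + 1))
    (p : X 0 → Y 0) : Prop :=
  ∀ ε > 0, ∃ δ > 0, ∀ n x y, bowenDist T n x y ≤ δ → bowenDist R n (p x) (p y) ≤ ε

lemma bowenEquicontinuous_of_semiconj {π : ∀ k, X k → Y k}
    (hsemi : ∀ k, ∀ x : X k, R k (π k x) = π (k + 1) (T k x))
    (hπ : ∀ ε : ℝ, 0 < ε → ∃ δ : ℝ, 0 < δ ∧ ∀ k, ∀ x y : X k,
      dist x y < δ → dist (π k x) (π k y) < ε) :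
    BowenEquicontinuous T R (π 0) := by
  intro ε hε
  obtain ⟨δ, hδ, hπδ⟩ := hπ ε hε
  refine ⟨δ / 2, half_pos hδ, fun n x y hxy => ?_⟩
  rw [bowenDist_le_iff hε.le]
  intro j hj
  rw [iter_semiconj hsemi, iter_semiconj hsemi]
  exact (hπδ j _ _ (((bowenDist_le_iff (half_pos hδ).le).mp hxy j hj).trans_lt
    (half_lt_self hδ))).le

section Transfer

variable {Z : Set (X 0)} {n N : ℕ} {ε δ : ℝ}

lemma IsSpanning.image [DecidableEq (Y 0)]
    (hp : ∀ x y, bowenDist T n x y ≤ δ → bowenDist R n (p x) (p y) ≤ ε) {F : Finset (X 0)}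
    (hF : IsSpanning T n δ Z F) : IsSpanning R n ε (p '' Z) (F.image p) := by
  rintro _ ⟨x, hx, rfl⟩
  obtain ⟨y, hy, hxy⟩ := hF x hx
  exact ⟨p y, Finset.mem_image_of_mem p hy, hp x y hxy⟩

lemma IsSeparated.exists_lift [DecidableEq (Y 0)]
    (hp : ∀ x y, bowenDist T n x y ≤ δ → bowenDist R n (p x) (p y) ≤ ε) {E : Finset (Y 0)}
    (hE : IsSeparated R n ε (p '' Z) E) :
    ∃ E' : Finset (X 0), IsSeparated T n δ Z E' ∧ E'.image p = E := by
  obtain ⟨E', hE'Z, hinj, rfl⟩ := Finset.exists_injOn_image_eq_of_subset_image hE.1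
  refine ⟨E', ⟨hE'Z, fun x hx y hy hxy => ?_⟩, rfl⟩
  by_contra! hle
  exact (hE.2 _ (Finset.mem_image_of_mem p hx) _ (Finset.mem_image_of_mem p hy)
    fun h => hxy (hinj hx hy h)).not_ge (hp x y hle)

lemma IsBowenCover.image
    (hp : ∀ n x y, bowenDist T n x y < δ → bowenDist R n (p x) (p y) < ε)
    {C : Set (X 0 × ℕ)} (hC : IsBowenCover T N δ Z C) :
    IsBowenCover R N ε (p '' Z) (Prod.map p id '' C) := by
  refine ⟨hC.1.image _, ?_, ?_⟩
  · rintro _ ⟨q, hq, rfl⟩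
    exact hC.2.1 q hq
  · rintro _ ⟨x, hx, rfl⟩
    obtain ⟨q, hq, hxq⟩ := mem_iUnion₂.mp (hC.2.2 hx)
    exact mem_iUnion₂.mpr ⟨_, mem_image_of_mem _ hq, hp _ _ _ hxq⟩

lemma IsBowenPacking.exists_lift
    (hp : ∀ n x y, bowenDist T n x y ≤ δ → bowenDist R n (p x) (p y) ≤ ε)
    {P : Set (Y 0 × ℕ)} (hP : IsBowenPacking R N ε (p '' Z) P) :
    ∃ P' : Set (X 0 × ℕ), IsBowenPacking T N δ Z P' ∧ Prod.map p id '' P' = P := by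
  have hsurj : SurjOn (Prod.map p id) (Z ×ˢ univ) P := fun q hq =>
    let ⟨x, hx, hxq⟩ := (hP.2.1 q hq).1
    ⟨(x, q.2), ⟨hx, trivial⟩, Prod.ext hxq rfl⟩
  obtain ⟨P', hP'Z, hbij⟩ := hsurj.exists_bijOn_subset
  refine ⟨P', ⟨hbij.mapsTo.countable_of_injOn hbij.injOn hP.1,
    fun q hq => ⟨(hP'Z hq).1, (hP.2.1 _ (hbij.mapsTo hq)).2⟩, ?_⟩, hbij.image_eq⟩
  intro q hq q' hq' hne
  refine disjoint_left.mpr fun z hz hz' => ?_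
  exact disjoint_left.mp (hP.2.2 _ (hbij.mapsTo hq) _ (hbij.mapsTo hq') (hbij.injOn.ne hq hq' hne))
    (hp _ _ _ hz) (hp _ _ _ hz')

lemma Qn_image_le (hbirk : ∀ x, birk R g n (p x) = birk T f n x)
    (hp : ∀ x y, bowenDist T n x y ≤ δ → bowenDist R n (p x) (p y) ≤ ε) :
    Qn R g (p '' Z) n ε ≤ Qn T f Z n δ := by
  classical
  exact le_iInf₂ fun F hF => (iInf₂_le _ (hF.image hp)).trans (partSum_image_le hbirk F)

lemma Pn_image_le (hbirk : ∀ x, birk R g n (p x) = birk T f n x)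
    (hp : ∀ x y, bowenDist T n x y ≤ δ → bowenDist R n (p x) (p y) ≤ ε) :
    Pn R g (p '' Z) n ε ≤ Pn T f Z n δ := by
  classical
  refine iSup₂_le fun E hE => ?_
  obtain ⟨E', hE', rfl⟩ := hE.exists_lift hp
  exact (partSum_image_le hbirk E').trans (le_iSup₂ (f := fun E _ => partSum T f n E) E' hE')

lemma bowenMeas_image_le (hbirk : ∀ n x, birk R g n (p x) = birk T f n x)
    (hp : ∀ n x y, bowenDist T n x y < δ → bowenDist R n (p x) (p y) < ε) (s : ℝ) :
    bowenMeas R g (p '' Z) s ε ≤ bowenMeas T f Z s δ :=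
  iSup_mono fun _ => le_iInf₂ fun C hC =>
    (iInf₂_le _ (hC.image hp)).trans (ballSum_image_le hbirk s C)

lemma packPre_image_le (hbirk : ∀ n x, birk R g n (p x) = birk T f n x)
    (hp : ∀ n x y, bowenDist T n x y ≤ δ → bowenDist R n (p x) (p y) ≤ ε) (s : ℝ) :
    packPre R g (p '' Z) s N ε ≤ packPre T f Z s N δ := by
  refine iSup₂_le fun P hP => ?_
  obtain ⟨P', hP', rfl⟩ := hP.exists_lift hp
  exact (ballSum_image_le hbirk s P').trans (le_iSup₂ (f := fun P _ => ballSum T f s P) P' hP')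

lemma packMeas_image_le (hbirk : ∀ n x, birk R g n (p x) = birk T f n x)
    (hp : ∀ n x y, bowenDist T n x y ≤ δ → bowenDist R n (p x) (p y) ≤ ε) (s : ℝ) :
    packMeas R g (p '' Z) s ε ≤ packMeas T f Z s δ :=
  le_iInf₂ fun D hD =>
    (iInf₂_le (fun i => p '' D i) ((image_mono hD).trans image_iUnion.subset)).trans
      (ENNReal.tsum_le_tsum fun _ => iInf_mono fun _ => packPre_image_le hbirk hp s)

end Transfer

section Pressure

variable (hbirk : ∀ n x, birk R g n (p x) = birk T f n x) (hp : BowenEquicontinuous T R p)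
  (Z : Set (X 0))
include hbirk hp

lemma Qlow_image_le : Qlow R g (p '' Z) ≤ Qlow T f Z :=
  iSup₂_pos_le_iSup₂_pos fun ε hε => let ⟨δ, hδ, hpδ⟩ := hp ε hε
    ⟨δ, hδ, lowRate_mono fun n => Qn_image_le (hbirk n) (hpδ n)⟩

lemma Qup_image_le : Qup R g (p '' Z) ≤ Qup T f Z :=
  iSup₂_pos_le_iSup₂_pos fun ε hε => let ⟨δ, hδ, hpδ⟩ := hp ε hε
    ⟨δ, hδ, upRate_mono fun n => Qn_image_le (hbirk n) (hpδ n)⟩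

lemma Plow_image_le : Plow R g (p '' Z) ≤ Plow T f Z :=
  iSup₂_pos_le_iSup₂_pos fun ε hε => let ⟨δ, hδ, hpδ⟩ := hp ε hε
    ⟨δ, hδ, lowRate_mono fun n => Pn_image_le (hbirk n) (hpδ n)⟩

lemma Pup_image_le : Pup R g (p '' Z) ≤ Pup T f Z :=
  iSup₂_pos_le_iSup₂_pos fun ε hε => let ⟨δ, hδ, hpδ⟩ := hp ε hε
    ⟨δ, hδ, upRate_mono fun n => Pn_image_le (hbirk n) (hpδ n)⟩

lemma PB_image_le : PB R g (p '' Z) ≤ PB T f Z :=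
  iSup₂_pos_le_iSup₂_pos fun ε hε => let ⟨δ, hδ, hpδ⟩ := hp (ε / 2) (half_pos hε)
    ⟨δ, hδ, crit_mono fun s => bowenMeas_image_le hbirk
      (fun n x y h => (hpδ n x y h.le).trans_lt (half_lt_self hε)) s⟩

lemma PP_image_le : PP R g (p '' Z) ≤ PP T f Z :=
  iSup₂_pos_le_iSup₂_pos fun ε hε => let ⟨δ, hδ, hpδ⟩ := hp ε hε
    ⟨δ, hδ, crit_mono fun s => packMeas_image_le hbirk hpδ s⟩

lemma pressures_image_le :
    Qlow R g (p '' Z) ≤ Qlow T f Z ∧ Qup R g (p '' Z) ≤ Qup T f Z ∧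
    Plow R g (p '' Z) ≤ Plow T f Z ∧ Pup R g (p '' Z) ≤ Pup T f Z ∧
    PB R g (p '' Z) ≤ PB T f Z ∧ PP R g (p '' Z) ≤ PP T f Z :=
  ⟨Qlow_image_le hbirk hp Z, Qup_image_le hbirk hp Z, Plow_image_le hbirk hp Z,
    Pup_image_le hbirk hp Z, PB_image_le hbirk hp Z, PP_image_le hbirk hp Z⟩

end Pressure

end NDS

theorem pressure_equiconjugacy_invariance_general {X Y : ℕ → Type*} [∀ k, MetricSpace (X k)]
    [∀ k, MetricSpace (Y k)] (T : ∀ k, X k → X (k + 1)) (R : ∀ k, Y k → Y (k + 1))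
    (π : ∀ k, X k → Y k)
    (hsemi : ∀ k, ∀ x : X k, R k (π k x) = π (k + 1) (T k x))
    (hπe : ∀ ε : ℝ, 0 < ε → ∃ δ : ℝ, 0 < δ ∧ ∀ k, ∀ x y : X k,
      dist x y < δ → dist (π k x) (π k y) < ε)
    (g : ∀ k, Y k → ℝ) (Z : Set (X 0)) :
    (NDS.Qlow R g (π 0 '' Z) ≤ NDS.Qlow T (fun k x => g k (π k x)) Z ∧
     NDS.Qup R g (π 0 '' Z) ≤ NDS.Qup T (fun k x => g k (π k x)) Z ∧
     NDS.Plow R g (π 0 '' Z) ≤ NDS.Plow T (fun k x => g k (π k x)) Z ∧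
     NDS.Pup R g (π 0 '' Z) ≤ NDS.Pup T (fun k x => g k (π k x)) Z ∧
     NDS.PB R g (π 0 '' Z) ≤ NDS.PB T (fun k x => g k (π k x)) Z ∧
     NDS.PP R g (π 0 '' Z) ≤ NDS.PP T (fun k x => g k (π k x)) Z) ∧
    ((∃ σ : ∀ k, Y k → X k,
        (∀ k, Function.LeftInverse (σ k) (π k)) ∧
        (∀ k, Function.RightInverse (σ k) (π k)) ∧
        (∀ ε : ℝ, 0 < ε → ∃ δ : ℝ, 0 < δ ∧ ∀ k, ∀ x y : Y k,
          dist x y < δ → dist (σ k x) (σ k y) < ε)) →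
      (NDS.Qlow T (fun k x => g k (π k x)) Z = NDS.Qlow R g (π 0 '' Z) ∧
       NDS.Qup T (fun k x => g k (π k x)) Z = NDS.Qup R g (π 0 '' Z) ∧
       NDS.Plow T (fun k x => g k (π k x)) Z = NDS.Plow R g (π 0 '' Z) ∧
       NDS.Pup T (fun k x => g k (π k x)) Z = NDS.Pup R g (π 0 '' Z) ∧
       NDS.PB T (fun k x => g k (π k x)) Z = NDS.PB R g (π 0 '' Z) ∧
       NDS.PP T (fun k x => g k (π k x)) Z = NDS.PP R g (π 0 '' Z))) := by
  have hle := NDS.pressures_image_le (NDS.birk_semiconj hsemi g)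
    (NDS.bowenEquicontinuous_of_semiconj hsemi hπe) Z
  refine ⟨hle, fun ⟨σ, hl, hr, hσe⟩ => ?_⟩
  have hge := NDS.pressures_image_le (p := σ 0) (f := g) (g := fun k x => g k (π k x))
    (fun n y => by rw [← NDS.birk_semiconj hsemi g, hr 0 y])
    (NDS.bowenEquicontinuous_of_semiconj (NDS.semiconj_of_inverse hsemi hl hr) hσe) (π 0 '' Z)
  rw [(hl 0).image_image] at hge
  exact ⟨hge.1.antisymm hle.1, hge.2.1.antisymm hle.2.1, hge.2.2.1.antisymm hle.2.2.1,
    hge.2.2.2.1.antisymm hle.2.2.2.1, hge.2.2.2.2.1.antisymm hle.2.2.2.2.1,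
    hge.2.2.2.2.2.antisymm hle.2.2.2.2.2⟩

/-- **invariance under equiconjugacies.** Let `π = {π_k}` be an
equisemiconjugacy from `(X,T)` to `(Y,R)` and `g` an equicontinuous potential on `Y`. Then
for each of the six pressures `P`, `P(T, π*g, Z) ≥ P(R, g, π_0(Z))`; if `π` is moreover an
equiconjugacy (each `π_k` invertible with equicontinuous inverses), equality holds. -/
theorem pressure_equiconjugacy_invariance {X Y : ℕ → Type*} [∀ k, MetricSpace (X k)]
    [∀ k, CompactSpace (X k)] [∀ k, MetricSpace (Y k)] [∀ k, CompactSpace (Y k)]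
    (T : ∀ k, X k → X (k + 1)) (hT : ∀ k, Continuous (T k))
    (R : ∀ k, Y k → Y (k + 1)) (hR : ∀ k, Continuous (R k))
    (π : ∀ k, X k → Y k) (hπc : ∀ k, Continuous (π k))
    (hπs : ∀ k, Function.Surjective (π k))
    (hsemi : ∀ k, ∀ x : X k, R k (π k x) = π (k + 1) (T k x))
    (hπe : ∀ ε : ℝ, 0 < ε → ∃ δ : ℝ, 0 < δ ∧ ∀ k, ∀ x y : X k,
      dist x y < δ → dist (π k x) (π k y) < ε)
    (g : ∀ k, Y k → ℝ) (hg : ∀ k, Continuous (g k)) (hge : NDS.EquicontPotential g)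
    (Z : Set (X 0)) :
    (NDS.Qlow R g (π 0 '' Z) ≤ NDS.Qlow T (fun k x => g k (π k x)) Z ∧
     NDS.Qup R g (π 0 '' Z) ≤ NDS.Qup T (fun k x => g k (π k x)) Z ∧
     NDS.Plow R g (π 0 '' Z) ≤ NDS.Plow T (fun k x => g k (π k x)) Z ∧
     NDS.Pup R g (π 0 '' Z) ≤ NDS.Pup T (fun k x => g k (π k x)) Z ∧
     NDS.PB R g (π 0 '' Z) ≤ NDS.PB T (fun k x => g k (π k x)) Z ∧
     NDS.PP R g (π 0 '' Z) ≤ NDS.PP T (fun k x => g k (π k x)) Z) ∧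
    ((∃ σ : ∀ k, Y k → X k,
        (∀ k, Function.LeftInverse (σ k) (π k)) ∧
        (∀ k, Function.RightInverse (σ k) (π k)) ∧
        (∀ ε : ℝ, 0 < ε → ∃ δ : ℝ, 0 < δ ∧ ∀ k, ∀ x y : Y k,
          dist x y < δ → dist (σ k x) (σ k y) < ε)) →
      (NDS.Qlow T (fun k x => g k (π k x)) Z = NDS.Qlow R g (π 0 '' Z) ∧
       NDS.Qup T (fun k x => g k (π k x)) Z = NDS.Qup R g (π 0 '' Z) ∧
       NDS.Plow T (fun k x => g k (π k x)) Z = NDS.Plow R g (π 0 '' Z) ∧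
       NDS.Pup T (fun k x => g k (π k x)) Z = NDS.Pup R g (π 0 '' Z) ∧
       NDS.PB T (fun k x => g k (π k x)) Z = NDS.PB R g (π 0 '' Z) ∧
       NDS.PP T (fun k x => g k (π k x)) Z = NDS.PP R g (π 0 '' Z))) :=
  pressure_equiconjugacy_invariance_general T R π hsemi hπe g Z
end
end
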